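/- arXiv:1808.00794 — 6 statements merged into one kernel-verified Lean document; each statement's English description precedes it below -/
import Mathlib

section
/- Fix real constants a > 0 and γ > 0. There exists a constant C > 0 such that for every positive integer n and every integer l with 1 ≤ l ≤ n, setting ρ = (1+γ)/n, ∫_0^1 (max(t − ρ l, 0))^a · l · C(n, l) · t^{l−1} (1−t)^{n−l} dt ≤ C / n^a. (Equivalently, E[ (|B_{l,n} − ρ l|^+)^a ] ≤ C n^{−a} where B_{l,n} has the Beta(l, n−l+1) distribution.) -/
open Real Set MeasureTheory


lemma binom_term_le_one {n l : ℕ} (hln : l ≤ n) {s : ℝ} (hs0 : 0 ≤ s) (hs1 : s ≤ 1) :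
    (n.choose l : ℝ) * s ^ l * (1 - s) ^ (n - l) ≤ 1 := by
  calc (n.choose l : ℝ) * s ^ l * (1 - s) ^ (n - l)
      = s ^ l * (1-s) ^ (n - l) * (n.choose l : ℝ) := by ring
    _ ≤ ∑ k ∈ Finset.range (n+1), s ^ k * (1-s) ^ (n-k) * (n.choose k : ℝ) := by
        apply Finset.single_le_sum (f := fun k => s ^ k * (1-s) ^ (n-k) * (n.choose k : ℝ))
        · intro i _; have h2 : (0:ℝ) ≤ 1 - s := by linarith
          positivity
        · simpa using Nat.lt_succ_of_le hln
    _ = 1 := by rw [← add_pow]; norm_num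

lemma density_le (γ : ℝ) (hγ : 0 < γ) (n l : ℕ) (hn : 0 < n) (hl : 1 ≤ l) (hln : l ≤ n)
    {t : ℝ} (hst : (1+γ)/n * l < t) (ht1 : t ≤ 1) :
    (l : ℝ) * (n.choose l : ℝ) * t ^ (l-1) * (1-t) ^ (n-l) ≤
      (n : ℝ) * Real.exp (-(γ/(1+γ) * n * (t - (1+γ)/n * l))) := by
  have hγ1 : (0:ℝ) < 1 + γ := by linarith
  have hn0 : (0:ℝ) < n := by exact_mod_cast hn
  have hl0 : (0:ℝ) < l := by exact_mod_cast hl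
  have hlnR : (l:ℝ) ≤ n := by exact_mod_cast hln
  set s : ℝ := (1+γ)/n * l with hs_def
  have hs0 : 0 < s := by positivity
  have hs1 : s < 1 := lt_of_lt_of_le hst ht1
  have hts : 0 < t - s := by linarith
  have h1s : 0 < 1 - s := by linarith
  have h1t : 0 ≤ 1 - t := by linarith
  -- cast facts
  have hcl : ((l - 1 : ℕ) : ℝ) = (l:ℝ) - 1 := by
    have := Nat.cast_sub hl (R := ℝ); simpa using this
  have hcnl : ((n - l : ℕ) : ℝ) = (n:ℝ) - l := by
    have := Nat.cast_sub hln (R := ℝ); simpa using this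
  -- step A : t^(l-1) ≤ s^(l-1) * exp ((l-1)/s * (t-s))
  have hA : t ^ (l-1) ≤ s ^ (l-1) * Real.exp (((l:ℝ)-1)/s * (t-s)) := by
    have hts' : t ≤ s * Real.exp ((t-s)/s) := by
      have h := Real.add_one_le_exp ((t-s)/s)
      calc t = s * ((t-s)/s + 1) := by field_simp; ring
        _ ≤ s * Real.exp ((t-s)/s) := by
            apply mul_le_mul_of_nonneg_left h hs0.le
    calc t ^ (l-1) ≤ (s * Real.exp ((t-s)/s)) ^ (l-1) := by
          apply pow_le_pow_left₀ (by linarith) hts'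
      _ = s ^ (l-1) * Real.exp (((l:ℝ)-1)/s * (t-s)) := by
          rw [mul_pow, ← Real.exp_nat_mul, hcl]
          ring_nf
  -- step B : (1-t)^(n-l) ≤ (1-s)^(n-l) * exp (-((n:ℝ)-l)/(1-s) * (t-s))
  have hB : (1-t) ^ (n-l) ≤ (1-s) ^ (n-l) * Real.exp (-(((n:ℝ)-l)/(1-s)) * (t-s)) := by
    have hts' : 1 - t ≤ (1-s) * Real.exp (-((t-s)/(1-s))) := by
      have h := Real.add_one_le_exp (-((t-s)/(1-s)))
      calc 1 - t = (1-s) * (-((t-s)/(1-s)) + 1) := by field_simp; ring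
        _ ≤ (1-s) * Real.exp (-((t-s)/(1-s))) := by
            apply mul_le_mul_of_nonneg_left h h1s.le
    calc (1-t) ^ (n-l) ≤ ((1-s) * Real.exp (-((t-s)/(1-s)))) ^ (n-l) := by
          apply pow_le_pow_left₀ h1t hts'
      _ = (1-s) ^ (n-l) * Real.exp (-(((n:ℝ)-l)/(1-s)) * (t-s)) := by
          rw [mul_pow, ← Real.exp_nat_mul, hcnl]
          ring_nf
  -- exponent bound
  have hexp : (((l:ℝ)-1)/s) * (t-s) + (-(((n:ℝ)-l)/(1-s))) * (t-s)
      ≤ -(γ/(1+γ) * n * (t - s)) := by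
    have hsn : s * n = (1+γ) * l := by
      rw [hs_def]; field_simp
    have e1 : ((l:ℝ)-1)/s ≤ (n:ℝ)/(1+γ) := by
      rw [div_le_div_iff₀ hs0 hγ1]
      nlinarith [hsn, hγ1]
    have e2 : (n:ℝ) ≤ ((n:ℝ)-l)/(1-s) := by
      rw [le_div_iff₀ h1s]
      nlinarith [hsn, mul_nonneg hγ.le hl0.le]
    have e3 : (n:ℝ)/(1+γ) - n = -(γ/(1+γ) * n) := by
      field_simp; ring
    nlinarith [mul_nonneg hts.le (sub_nonneg.mpr e1), mul_nonneg hts.le (sub_nonneg.mpr e2), e3]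
  -- step 2 : l * C * s^(l-1) * (1-s)^(n-l) ≤ n
  have hC : (l:ℝ) * (n.choose l : ℝ) * s ^ (l-1) * (1-s) ^ (n-l) ≤ (n:ℝ) := by
    have hsl : s ^ l = s ^ (l-1) * s := by
      rw [← pow_succ]; congr 1; omega
    have hb := binom_term_le_one hln hs0.le hs1.le
    have hls : (l:ℝ)/s = (n:ℝ)/(1+γ) := by
      rw [hs_def]; field_simp
    have key : (l:ℝ) * (n.choose l : ℝ) * s ^ (l-1) * (1-s) ^ (n-l)
        = ((l:ℝ)/s) * ((n.choose l : ℝ) * s ^ l * (1-s) ^ (n-l)) := by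
      rw [hsl]; field_simp
    rw [key, hls]
    have h2 : (n:ℝ)/(1+γ) ≤ n := div_le_self hn0.le (by linarith)
    have h3 : (0:ℝ) ≤ (n:ℝ)/(1+γ) := by positivity
    calc (n:ℝ)/(1+γ) * ((n.choose l : ℝ) * s ^ l * (1-s) ^ (n-l))
        ≤ (n:ℝ)/(1+γ) * 1 := by
          apply mul_le_mul_of_nonneg_left hb h3
      _ ≤ n := by linarith
  -- combine
  calc (l : ℝ) * (n.choose l : ℝ) * t ^ (l-1) * (1-t) ^ (n-l)
      ≤ (l : ℝ) * (n.choose l : ℝ) * (s ^ (l-1) * Real.exp (((l:ℝ)-1)/s * (t-s)))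
          * ((1-s) ^ (n-l) * Real.exp (-(((n:ℝ)-l)/(1-s)) * (t-s))) := by
        have hpos : (0:ℝ) ≤ (l : ℝ) * (n.choose l : ℝ) := by positivity
        apply mul_le_mul
        · apply mul_le_mul_of_nonneg_left hA hpos
        · exact hB
        · positivity
        · positivity
    _ = ((l : ℝ) * (n.choose l : ℝ) * s ^ (l-1) * (1-s) ^ (n-l))
          * Real.exp ((((l:ℝ)-1)/s) * (t-s) + (-(((n:ℝ)-l)/(1-s))) * (t-s)) := by
        rw [Real.exp_add]; ring
    _ ≤ (n : ℝ) * Real.exp (-(γ/(1+γ) * n * (t - s))) := by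
        apply mul_le_mul hC (Real.exp_le_exp.mpr hexp) (Real.exp_pos _).le hn0.le


/-- with `ρ = (1+γ)/n`, the `a`-th moment of the positive part of
`Beta(l, n-l+1) - ρl` is `O(n^{-a})`, uniformly in `1 ≤ l ≤ n`:
`∫₀¹ (max (t - ρl) 0)^a · l·C(n,l)·t^{l-1}(1-t)^{n-l} dt ≤ C / n^a`. -/
theorem stmt_7 (a γ : ℝ) (ha : 0 < a) (hγ : 0 < γ) :
    ∃ C > 0, ∀ n : ℕ, 0 < n → ∀ l : ℕ, 1 ≤ l → l ≤ n →
      ∫ t in (0 : ℝ)..1,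
          (max (t - (1 + γ) / n * l) 0) ^ a *
            ((l : ℝ) * (n.choose l : ℝ) * t ^ (l - 1) * (1 - t) ^ (n - l))
        ≤ C / (n : ℝ) ^ a := by
  have hγ1 : (0:ℝ) < 1 + γ := by linarith
  set c : ℝ := γ / (1 + γ) with hc_def
  have hc : 0 < c := by positivity
  refine ⟨Real.Gamma (a+1) / c ^ (a+1), by positivity, ?_⟩
  intro n hn l hl hln
  have hn0 : (0:ℝ) < n := by exact_mod_cast hn
  set s : ℝ := (1 + γ) / n * l with hs_def
  set b : ℝ := c * n with hb_def
  have hb : 0 < b := by positivity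
  set ψ : ℝ → ℝ := Set.indicator (Set.Ioi (0:ℝ)) (fun u => u ^ a * Real.exp (-(b * u)))
    with hψ_def
  have hψ_nonneg : ∀ u, 0 ≤ ψ u := by
    intro u
    apply Set.indicator_nonneg
    intro x hx
    have : (0:ℝ) < x := hx
    positivity
  have hψ_int : Integrable ψ := by
    rw [hψ_def, integrable_indicator_iff measurableSet_Ioi]
    have h := integrableOn_rpow_mul_exp_neg_mul_rpow (show (-1:ℝ) < a by linarith) (show (0:ℝ) < 1 by norm_num) hb
    refine h.congr_fun (fun x hx => ?_) measurableSet_Ioi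
    beta_reduce
    rw [Real.rpow_one, neg_mul]
  have hH_int : Integrable (fun t => (n:ℝ) * ψ (t - s)) :=
    (hψ_int.comp_sub_right s).const_mul _
  -- pointwise bound on [0,1]
  have key : ∀ t ∈ Set.Icc (0:ℝ) 1,
      (max (t - s) 0) ^ a * ((l : ℝ) * (n.choose l : ℝ) * t ^ (l - 1) * (1 - t) ^ (n - l))
        ≤ (n:ℝ) * ψ (t - s) := by
    intro t ht
    obtain ⟨ht0, ht1⟩ := ht
    rcases le_or_gt t s with hts | hts
    · rw [max_eq_right (by linarith), Real.zero_rpow ha.ne', zero_mul]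
      exact mul_nonneg hn0.le (hψ_nonneg _)
    · rw [max_eq_left (by linarith)]
      have hmem : t - s ∈ Set.Ioi (0:ℝ) := by simp [hts]
      rw [hψ_def, Set.indicator_of_mem hmem]
      have hd := density_le γ hγ n l hn hl hln hts ht1
      have hb_eq : -(b * (t - s)) = -(γ/(1+γ) * n * (t - s)) := by
        rw [hb_def, hc_def]
      rw [hb_eq]
      have hnn : (0:ℝ) ≤ (t - s) ^ a := Real.rpow_nonneg (by linarith) a
      calc (t - s) ^ a * ((l : ℝ) * (n.choose l : ℝ) * t ^ (l - 1) * (1 - t) ^ (n - l))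
          ≤ (t - s) ^ a * ((n:ℝ) * Real.exp (-(γ/(1+γ) * n * (t - s)))) :=
            mul_le_mul_of_nonneg_left hd hnn
        _ = (n:ℝ) * ((t - s) ^ a * Real.exp (-(γ/(1+γ) * n * (t - s)))) := by ring
  -- integrability of the LHS
  have hg_cont : Continuous (fun t : ℝ =>
      (max (t - s) 0) ^ a * ((l : ℝ) * (n.choose l : ℝ) * t ^ (l - 1) * (1 - t) ^ (n - l))) := by
    apply Continuous.mul
    · exact ((continuous_id.sub continuous_const).max continuous_const).rpow_const
        (fun x => Or.inr ha.le)
    · continuity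
  have step1 : ∫ t in (0 : ℝ)..1,
      (max (t - s) 0) ^ a * ((l : ℝ) * (n.choose l : ℝ) * t ^ (l - 1) * (1 - t) ^ (n - l))
        ≤ ∫ t in (0 : ℝ)..1, (n:ℝ) * ψ (t - s) :=
    intervalIntegral.integral_mono_on zero_le_one (hg_cont.intervalIntegrable 0 1)
      hH_int.intervalIntegrable key
  have step2 : ∫ t in (0 : ℝ)..1, (n:ℝ) * ψ (t - s) ≤ ∫ t, (n:ℝ) * ψ (t - s) := by
    rw [intervalIntegral.integral_of_le zero_le_one]
    exact setIntegral_le_integral hH_int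
      (Filter.Eventually.of_forall fun t => mul_nonneg hn0.le (hψ_nonneg _))
  have step3 : ∫ t, (n:ℝ) * ψ (t - s) = (n:ℝ) * ((1/b) ^ (a+1) * Real.Gamma (a+1)) := by
    rw [MeasureTheory.integral_const_mul]
    congr 1
    rw [show (fun t => ψ (t - s)) = (fun t => ψ (t - s)) from rfl]
    rw [MeasureTheory.integral_sub_right_eq_self ψ s, hψ_def,
      MeasureTheory.integral_indicator measurableSet_Ioi]
    have h := integral_rpow_mul_exp_neg_mul_Ioi (show (0:ℝ) < a + 1 by linarith) hb
    simpa using h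
  have step4 : (n:ℝ) * ((1/b) ^ (a+1) * Real.Gamma (a+1))
      = Real.Gamma (a+1) / c ^ (a+1) / (n:ℝ) ^ a := by
    have h3 : (1/b) ^ (a+1) = 1 / (c^(a+1) * ((n:ℝ)^a * n)) := by
      rw [one_div, Real.inv_rpow hb.le, hb_def, Real.mul_rpow hc.le hn0.le,
        Real.rpow_add hn0, Real.rpow_one, one_div]
    rw [h3]
    have p1 : (0:ℝ) < c ^ (a+1) := Real.rpow_pos_of_pos hc _
    have p2 : (0:ℝ) < (n:ℝ) ^ a := Real.rpow_pos_of_pos hn0 _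
    field_simp
  calc ∫ t in (0 : ℝ)..1,
        (max (t - s) 0) ^ a * ((l : ℝ) * (n.choose l : ℝ) * t ^ (l - 1) * (1 - t) ^ (n - l))
      ≤ ∫ t, (n:ℝ) * ψ (t - s) := le_trans step1 step2
    _ = Real.Gamma (a+1) / c ^ (a+1) / (n:ℝ) ^ a := by rw [step3, step4]
end

section
/- Fix real constants a > 0 and γ > 0. There exists a constant C > 0 such that for every positive integer n, setting ρ = (1+γ)/n, Σ_{l=1}^n (n/l) · ∫_0^1 (max(t − ρ l, 0))^a · l · C(n, l) · t^{l−1} (1−t)^{n−l} dt ≤ C n^{1−a}. (Equivalently, Σ_{l=1}^n (n/l) · E[ (|B_{l,n} − ρ l|^+)^a ] ≤ C n^{1−a} where B_{l,n} has the Beta(l, n−l+1) distribution.) -/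
set_option maxHeartbeats 1000000
open scoped Nat
open intervalIntegral

open intervalIntegral

lemma beta_nat_int (m p : ℕ) :
    ∫ t in (0:ℝ)..1, t ^ m * (1 - t) ^ p
      = (m ! * p ! : ℝ) / (m + p + 1)! := by
  induction p generalizing m with
  | zero =>
    have := Nat.factorial_pos m
    simp [integral_pow, Nat.factorial_succ]
    field_simp
  | succ p ih =>
    have hderiv : ∀ t ∈ Set.uIcc (0:ℝ) 1,
        HasDerivAt (fun t : ℝ => t ^ (m+1) * (1 - t) ^ (p+1))
          (((m:ℝ)+1) * t ^ m * (1-t)^(p+1) - ((p:ℝ)+1) * t^(m+1) * (1-t)^p) t := by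
      intro t _
      have h1 : HasDerivAt (fun t : ℝ => t ^ (m+1)) (((m:ℝ)+1) * t ^ m) t := by
        simpa using hasDerivAt_pow (m+1) t
      have h2 : HasDerivAt (fun t : ℝ => (1 - t) ^ (p+1))
          (-(((p:ℝ)+1) * (1-t) ^ p)) t := by
        have := (hasDerivAt_pow (p+1) (1 - t)).comp t ((hasDerivAt_id t).const_sub 1)
        simpa [mul_comm, Function.comp_def] using this
      have := h1.mul h2
      refine this.congr_deriv ?_
      push_cast
      ring
    have hint : IntervalIntegrable
        (fun t : ℝ => ((m:ℝ)+1) * t ^ m * (1-t)^(p+1) - ((p:ℝ)+1) * t^(m+1) * (1-t)^p)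
        MeasureTheory.volume 0 1 := by
      apply Continuous.intervalIntegrable; continuity
    have key := integral_eq_sub_of_hasDerivAt hderiv hint
    simp only [one_pow, sub_self, zero_pow, ne_eq, Nat.succ_ne_zero, not_false_iff,
      mul_zero, zero_mul, sub_zero, zero_pow] at key
    -- key : ∫ ... = 0
    have key2 : ((m:ℝ)+1) * ∫ t in (0:ℝ)..1, t ^ m * (1-t)^(p+1)
        = ((p:ℝ)+1) * ∫ t in (0:ℝ)..1, t^(m+1) * (1-t)^p := by
      have i1 : IntervalIntegrable (fun t : ℝ => ((m:ℝ)+1) * (t ^ m * (1-t)^(p+1)))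
          MeasureTheory.volume 0 1 := by
        apply Continuous.intervalIntegrable; continuity
      have i2 : IntervalIntegrable (fun t : ℝ => ((p:ℝ)+1) * (t^(m+1) * (1-t)^p))
          MeasureTheory.volume 0 1 := by
        apply Continuous.intervalIntegrable; continuity
      have := integral_sub i1 i2
      rw [← integral_const_mul, ← integral_const_mul]
      have e : (fun t : ℝ => ((m:ℝ)+1) * t ^ m * (1-t)^(p+1) - ((p:ℝ)+1) * t^(m+1) * (1-t)^p)
          = fun t : ℝ => ((m:ℝ)+1) * (t ^ m * (1-t)^(p+1)) - ((p:ℝ)+1) * (t^(m+1) * (1-t)^p) := by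
        funext t; ring
      rw [e] at key
      rw [this] at key
      linarith [key]
    rw [ih (m+1)] at key2
    have hm : ((m:ℝ)+1) ≠ 0 := by positivity
    field_simp at key2 ⊢
    rw [show m + (p+1) + 1 = (m+1) + p + 1 by ring] at *
    push_cast [Nat.factorial_succ] at key2 ⊢
    nlinarith [key2, Nat.factorial_pos m, Nat.factorial_pos p,
      Nat.factorial_pos (m+1+p+1)]

lemma rpow_le_const_mul_exp {a c : ℝ} (ha : 0 < a) (hc : 0 < c) (x : ℝ) :
    (max x 0) ^ a ≤ (a / c) ^ a * Real.exp (c * x - a) := by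
  rcases le_or_gt x 0 with hx | hx
  · rw [max_eq_right hx, Real.zero_rpow ha.ne']
    positivity
  · rw [max_eq_left hx.le]
    have hac : 0 < a / c := by positivity
    rw [Real.rpow_def_of_pos hx, Real.rpow_def_of_pos hac, ← Real.exp_add]
    apply Real.exp_le_exp.2
    have hlog : Real.log (x * (c / a)) ≤ x * (c / a) - 1 :=
      Real.log_le_sub_one_of_pos (by positivity)
    rw [Real.log_mul hx.ne' (by positivity), Real.log_div hc.ne' ha.ne'] at hlog
    have hr : x * (c / a) = c * x / a := by ring
    rw [hr] at hlog
    have h2 : Real.log x ≤ Real.log (a/c) + (c * x / a - 1) := by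
      rw [Real.log_div ha.ne' hc.ne']
      linarith
    calc Real.log x * a ≤ (Real.log (a/c) + (c*x/a - 1)) * a :=
          mul_le_mul_of_nonneg_right h2 ha.le
      _ = Real.log (a/c) * a + (c * x - a) := by field_simp

lemma real_exp_tsum (x : ℝ) : Real.exp x = ∑' n : ℕ, x ^ n / n ! := by
  rw [Real.exp_eq_exp_ℝ, NormedSpace.exp_eq_tsum_div]

lemma exp_remainder {s x : ℝ} (hx0 : 0 ≤ x) (hxs : x ≤ s) (K : ℕ) :
    Real.exp x ≤ ∑ k ∈ Finset.range K, x ^ k / k !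
      + (Real.exp s - ∑ k ∈ Finset.range K, s ^ k / k !) := by
  have Sx := Real.summable_pow_div_factorial x
  have Ss := Real.summable_pow_div_factorial s
  have hx := Summable.sum_add_tsum_nat_add (f := fun n : ℕ => x ^ n / n !) K Sx
  have hsd := Summable.sum_add_tsum_nat_add (f := fun n : ℕ => s ^ n / n !) K Ss
  rw [← real_exp_tsum] at hx hsd
  have tail_le : (∑' i : ℕ, x ^ (i + K) / (i + K)!) ≤ ∑' i : ℕ, s ^ (i + K) / (i + K)! := by
    refine Summable.tsum_le_tsum (fun i => ?_) ((summable_nat_add_iff K).2 Sx)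
      ((summable_nat_add_iff K).2 Ss)
    have : x ^ (i + K) ≤ s ^ (i + K) := pow_le_pow_left₀ hx0 hxs _
    have hf : (0:ℝ) < (i + K)! := by positivity
    gcongr
  linarith

lemma partial_choose_le {θ : ℝ} (h0 : 0 ≤ θ) (h1 : θ < 1) (m K : ℕ) :
    ∑ k ∈ Finset.range K, ((k + m).choose m : ℝ) * θ ^ k ≤ (1 / (1 - θ)) ^ (m + 1) := by
  have hs := hasSum_choose_mul_geometric_of_norm_lt_one (𝕜 := ℝ) m
    (r := θ) (by rwa [Real.norm_eq_abs, abs_of_nonneg h0])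
  calc ∑ k ∈ Finset.range K, ((k + m).choose m : ℝ) * θ ^ k
      ≤ 1 / (1 - θ) ^ (m + 1) := sum_le_hasSum _ (fun i _ => by positivity) hs
    _ = (1 / (1 - θ)) ^ (m + 1) := by rw [div_pow, one_pow]

lemma nat_key {n l : ℕ} (k : ℕ) (hl1 : 1 ≤ l) (hln : l ≤ n) :
    n ^ k * (l * n.choose l * (l - 1 + k)! * (n - l)!)
      ≤ k ! * ((k + (l-1)).choose (l-1)) * (n + k)! := by
  obtain ⟨m, rfl⟩ : ∃ m, l = m + 1 := ⟨l - 1, by omega⟩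
  simp only [Nat.add_sub_cancel]
  have c1 : n.choose (m+1) * (m+1)! * (n-(m+1))! = n ! :=
    Nat.choose_mul_factorial_mul_factorial hln
  have c2 : (k+m).choose m * m ! * k ! = (k+m)! := by
    have := Nat.choose_mul_factorial_mul_factorial (Nat.le_add_left m k)
    simpa [Nat.add_sub_cancel] using this
  have c3 : n ! * n ^ k ≤ (n + k)! := by
    calc n ! * n ^ k ≤ n ! * (n+1) ^ k :=
          Nat.mul_le_mul_left _ (Nat.pow_le_pow_left (Nat.le_succ n) k)
      _ ≤ (n + k)! := Nat.factorial_mul_pow_le_factorial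
  refine Nat.le_of_mul_le_mul_right ?_ (Nat.factorial_pos m)
  calc n ^ k * ((m+1) * n.choose (m+1) * (m + k)! * (n-(m+1))!) * m !
      = (n.choose (m+1) * (m+1)! * (n-(m+1))!) * (n ^ k * (m+k)!) := by
        rw [Nat.factorial_succ]; ring
    _ = (n ! * n ^ k) * (m+k)! := by rw [c1]; ring
    _ ≤ (n + k)! * (m+k)! := Nat.mul_le_mul_right _ c3
    _ = k ! * ((k+m).choose m) * (n + k)! * m ! := by
        rw [show m + k = k + m from by ring, ← c2]; ring

lemma hterm' (n l k : ℕ) (hl1 : 1 ≤ l) (hln : l ≤ n) {θ : ℝ} (hθ : 0 ≤ θ) :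
    (θ * n) ^ k / (k ! : ℝ) * ((l:ℝ) * (n.choose l : ℝ)) *
        ((((l-1+k)! : ℕ) : ℝ) * (((n-l)! : ℕ) : ℝ) / ((((l-1+k) + (n-l) + 1)! : ℕ) : ℝ))
      ≤ ((k + (l-1)).choose (l-1) : ℝ) * θ ^ k := by
  have hd : (l-1+k) + (n-l) + 1 = n + k := by omega
  rw [hd, mul_pow]
  have hcast : ((n:ℝ)) ^ k * ((l:ℝ) * (n.choose l : ℝ) * (((l-1+k)! : ℕ) : ℝ) * (((n-l)! : ℕ) : ℝ))
      ≤ ((k ! : ℕ) : ℝ) * (((k + (l-1)).choose (l-1) : ℕ) : ℝ) * (((n+k)! : ℕ) : ℝ) := by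
    exact_mod_cast nat_key (n := n) (l := l) k hl1 hln
  have hkf : (0:ℝ) < ((k ! : ℕ) : ℝ) := by positivity
  have hnk : (0:ℝ) < (((n+k)! : ℕ) : ℝ) := by positivity
  have hθk : (0:ℝ) ≤ θ ^ k := by positivity
  have lhs_eq : θ ^ k * (n:ℝ) ^ k / ((k ! : ℕ) : ℝ) * ((l:ℝ) * (n.choose l : ℝ)) *
      ((((l-1+k)! : ℕ) : ℝ) * (((n-l)! : ℕ) : ℝ) / (((n+k)! : ℕ) : ℝ))
      = θ ^ k * ((n:ℝ) ^ k * ((l:ℝ) * (n.choose l : ℝ) * (((l-1+k)! : ℕ) : ℝ) * (((n-l)! : ℕ) : ℝ)))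
        / (((k ! : ℕ) : ℝ) * (((n+k)! : ℕ) : ℝ)) := by
    field_simp
  rw [lhs_eq, div_le_iff₀ (by positivity)]
  calc θ ^ k * ((n:ℝ) ^ k * ((l:ℝ) * (n.choose l : ℝ) * (((l-1+k)! : ℕ) : ℝ) * (((n-l)! : ℕ) : ℝ)))
      ≤ θ ^ k * (((k ! : ℕ) : ℝ) * (((k + (l-1)).choose (l-1) : ℕ) : ℝ) * (((n+k)! : ℕ) : ℝ)) :=
        mul_le_mul_of_nonneg_left hcast hθk
    _ = ((k + (l-1)).choose (l-1) : ℝ) * θ ^ k * (((k ! : ℕ) : ℝ) * (((n+k)! : ℕ) : ℝ)) := by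
        ring


lemma J_bound (n l : ℕ) (hl1 : 1 ≤ l) (hln : l ≤ n) {θ : ℝ} (hθ0 : 0 < θ) (hθ1 : θ < 1) :
    ∫ t in (0:ℝ)..1,
        Real.exp (θ * n * t) * ((l:ℝ) * (n.choose l : ℝ) * t ^ (l-1) * (1-t) ^ (n-l))
      ≤ (1 / (1 - θ)) ^ l := by
  obtain ⟨s, hs⟩ : ∃ s : ℝ, s = θ * n := ⟨_, rfl⟩
  obtain ⟨C, hC⟩ : ∃ C : ℝ, C = (l:ℝ) * (n.choose l : ℝ) := ⟨_, rfl⟩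
  rw [show (fun t : ℝ => Real.exp (θ * n * t) * ((l:ℝ) * (n.choose l : ℝ) * t ^ (l-1) * (1-t) ^ (n-l)))
      = fun t : ℝ => Real.exp (s * t) * (C * t ^ (l-1) * (1-t) ^ (n-l)) from by
    funext t; rw [hs, hC]]
  have hs0 : 0 ≤ s := by rw [hs]; positivity
  have hC0 : 0 ≤ C := by rw [hC]; positivity
  -- the normalization: C * β(l-1, n-l) = 1
  have hnorm : C * ((((l-1)! : ℕ) : ℝ) * (((n-l)! : ℕ) : ℝ) / ((((l-1) + (n-l) + 1)! : ℕ) : ℝ)) = 1 := by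
    have hd : (l-1) + (n-l) + 1 = n := by omega
    rw [hd, hC]
    have hnat : l * n.choose l * ((l-1)! * (n-l)!) = n ! := by
      obtain ⟨m, rfl⟩ : ∃ m, l = m + 1 := ⟨l - 1, by omega⟩
      have c1 : n.choose (m+1) * (m+1)! * (n-(m+1))! = n ! :=
        Nat.choose_mul_factorial_mul_factorial hln
      simp only [Nat.add_sub_cancel]
      rw [← c1, Nat.factorial_succ]; ring
    have hnf : (0:ℝ) < ((n ! : ℕ) : ℝ) := by positivity
    rw [mul_div_assoc', div_eq_one_iff_eq hnf.ne']
    exact_mod_cast hnat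
  -- per-K bound
  have hK : ∀ K : ℕ,
      (∫ t in (0:ℝ)..1, Real.exp (s * t) * (C * t ^ (l-1) * (1-t) ^ (n-l)))
        ≤ (1 / (1 - θ)) ^ l + (Real.exp s - ∑ k ∈ Finset.range K, s ^ k / k !) := by
    intro K
    obtain ⟨R, hR⟩ : ∃ R : ℝ, R = Real.exp s - ∑ k ∈ Finset.range K, s ^ k / k ! := ⟨_, rfl⟩
    rw [← hR]
    have hR0 : 0 ≤ R := by
      have := Real.sum_le_exp_of_nonneg hs0 K
      rw [hR]; linarith
    have hpt : ∀ t ∈ Set.Icc (0:ℝ) 1,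
        Real.exp (s * t) * (C * t ^ (l-1) * (1-t) ^ (n-l))
          ≤ (∑ k ∈ Finset.range K, (s*t) ^ k / k ! + R) * (C * t ^ (l-1) * (1-t) ^ (n-l)) := by
      intro t ht
      have hf0 : 0 ≤ C * t ^ (l-1) * (1-t) ^ (n-l) := by
        have h1 : (0:ℝ) ≤ t ^ (l-1) := pow_nonneg ht.1 _
        have h2 : (0:ℝ) ≤ (1-t) ^ (n-l) := pow_nonneg (by linarith [ht.2]) _
        positivity
      refine mul_le_mul_of_nonneg_right ?_ hf0
      have hst0 : 0 ≤ s * t := mul_nonneg hs0 ht.1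
      have hsts : s * t ≤ s := by nlinarith [ht.2, ht.1]
      have := exp_remainder hst0 hsts K
      rw [hR]; linarith
    have hint1 : IntervalIntegrable
        (fun t : ℝ => Real.exp (s * t) * (C * t ^ (l-1) * (1-t) ^ (n-l)))
        MeasureTheory.volume 0 1 := by
      apply Continuous.intervalIntegrable; continuity
    have hint2 : IntervalIntegrable
        (fun t : ℝ => (∑ k ∈ Finset.range K, (s*t) ^ k / k ! + R) * (C * t ^ (l-1) * (1-t) ^ (n-l)))
        MeasureTheory.volume 0 1 := by
      apply Continuous.intervalIntegrable
      apply Continuous.mul _ (by continuity)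
      apply Continuous.add _ continuous_const
      exact continuous_finset_sum _ (fun k _ => by continuity)
    have step1 := intervalIntegral.integral_mono_on zero_le_one hint1 hint2 hpt
    have expand : ∀ t : ℝ,
        (∑ k ∈ Finset.range K, (s*t) ^ k / k ! + R) * (C * t ^ (l-1) * (1-t) ^ (n-l))
          = (∑ k ∈ Finset.range K, (s ^ k / k ! * C) * (t ^ (l-1+k) * (1-t) ^ (n-l)))
            + (R * C) * (t ^ (l-1) * (1-t) ^ (n-l)) := by
      intro t
      rw [add_mul, Finset.sum_mul]
      congr 1
      · refine Finset.sum_congr rfl (fun k _ => ?_)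
        rw [mul_pow, pow_add]
        ring
      · ring
    have hrhs : (∫ t in (0:ℝ)..1,
        (∑ k ∈ Finset.range K, (s*t) ^ k / k ! + R) * (C * t ^ (l-1) * (1-t) ^ (n-l)))
        = (∑ k ∈ Finset.range K, (s ^ k / k ! * C) *
            ((((l-1+k)! : ℕ) : ℝ) * (((n-l)! : ℕ) : ℝ) / ((((l-1+k) + (n-l) + 1)! : ℕ) : ℝ)))
          + (R * C) * ((((l-1)! : ℕ) : ℝ) * (((n-l)! : ℕ) : ℝ) / ((((l-1) + (n-l) + 1)! : ℕ) : ℝ)) := by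
      rw [intervalIntegral.integral_congr (g := fun t =>
          (∑ k ∈ Finset.range K, (s ^ k / k ! * C) * (t ^ (l-1+k) * (1-t) ^ (n-l)))
            + (R * C) * (t ^ (l-1) * (1-t) ^ (n-l))) (fun t _ => expand t)]
      rw [intervalIntegral.integral_add]
      · rw [intervalIntegral.integral_finset_sum]
        · rw [intervalIntegral.integral_const_mul, beta_nat_int]
          congr 1
          refine Finset.sum_congr rfl (fun k _ => ?_)
          rw [intervalIntegral.integral_const_mul, beta_nat_int]
        · intro k _
          apply Continuous.intervalIntegrable; continuity
      · apply Continuous.intervalIntegrable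
        exact continuous_finset_sum _ (fun k _ => by continuity)
      · apply Continuous.intervalIntegrable; continuity
    rw [hrhs] at step1
    have hsum : (∑ k ∈ Finset.range K, (s ^ k / k ! * C) *
        ((((l-1+k)! : ℕ) : ℝ) * (((n-l)! : ℕ) : ℝ) / ((((l-1+k) + (n-l) + 1)! : ℕ) : ℝ)))
        ≤ (1 / (1 - θ)) ^ l := by
      have h1 : ∀ k ∈ Finset.range K, (s ^ k / k ! * C) *
          ((((l-1+k)! : ℕ) : ℝ) * (((n-l)! : ℕ) : ℝ) / ((((l-1+k) + (n-l) + 1)! : ℕ) : ℝ))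
          ≤ ((k + (l-1)).choose (l-1) : ℝ) * θ ^ k := by
        intro k _
        rw [hs, hC]
        exact hterm' n l k hl1 hln hθ0.le
      have h2 := Finset.sum_le_sum h1
      have h3 := partial_choose_le hθ0.le hθ1 (l-1) K
      have h4 : (l-1)+1 = l := by omega
      rw [h4] at h3
      exact h2.trans h3
    have hRpart : R * C * ((((l-1)! : ℕ) : ℝ) * (((n-l)! : ℕ) : ℝ) / ((((l-1) + (n-l) + 1)! : ℕ) : ℝ)) = R := by
      rw [mul_assoc, hnorm, mul_one]
    rw [hRpart] at step1
    exact step1.trans (add_le_add_left hsum R)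
  have htend : Filter.Tendsto (fun K : ℕ => Real.exp s - ∑ k ∈ Finset.range K, s ^ k / k !)
      Filter.atTop (nhds 0) := by
    have hsum : HasSum (fun k : ℕ => s ^ k / k !) (Real.exp s) := by
      rw [real_exp_tsum]
      exact (Real.summable_pow_div_factorial s).hasSum
    have h2 := Filter.Tendsto.const_sub (Real.exp s) hsum.tendsto_sum_nat
    simpa using h2
  have hle : (∫ t in (0:ℝ)..1, Real.exp (s * t) * (C * t ^ (l-1) * (1-t) ^ (n-l)))
      - (1 / (1 - θ)) ^ l ≤ 0 := by
    refine ge_of_tendsto htend (Filter.Eventually.of_forall (fun K => ?_))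
    have := hK K
    linarith
  linarith


/-- with `ρ = (1+γ)/n`,
`Σ_{l=1}^n (n/l) · ∫₀¹ (max (t - ρl) 0)^a · l·C(n,l)·t^{l-1}(1-t)^{n-l} dt ≤ C n^{1-a}`. -/
theorem stmt_8 (a γ : ℝ) (ha : 0 < a) (hγ : 0 < γ) :
    ∃ C > 0, ∀ n : ℕ, 0 < n →
      ∑ l ∈ Finset.Icc 1 n,
          (n : ℝ) / l *
            ∫ t in (0 : ℝ)..1,
              (max (t - (1 + γ) / n * l) 0) ^ a *
                ((l : ℝ) * (n.choose l : ℝ) * t ^ (l - 1) * (1 - t) ^ (n - l))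
        ≤ C * (n : ℝ) ^ (1 - a) := by
  set θ : ℝ := γ / (2 + γ) with hθdef
  have hθ0 : 0 < θ := by positivity
  have hθ1 : θ < 1 := by
    rw [hθdef, div_lt_one (by linarith)]; linarith
  set q : ℝ := Real.exp (-(θ * (1 + γ))) * (1 / (1 - θ)) with hqdef
  have h1θ : 0 < 1 - θ := by linarith
  have hq0 : 0 < q := by
    rw [hqdef]; positivity
  have hq1 : q < 1 := by
    have hθval : θ * (1 + γ/2) = γ/2 := by
      rw [hθdef]; field_simp
    have h1 : 1 < (1-θ) * Real.exp (θ * (1 + γ)) := by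
      have h3 : Real.exp (θ * (1 + γ/2)) ≤ Real.exp (θ * (1 + γ)) := by
        apply Real.exp_le_exp.2; nlinarith
      have h4s : θ * (1 + γ/2) + 1 < Real.exp (θ * (1 + γ/2)) :=
        Real.add_one_lt_exp (by positivity)
      nlinarith [h3, h4s, hθval, hθ0, h1θ]
    rw [hqdef, mul_one_div, div_lt_one h1θ, Real.exp_neg]
    have hE : 0 < Real.exp (θ * (1 + γ)) := Real.exp_pos _
    have hEi : 0 < (Real.exp (θ * (1 + γ)))⁻¹ := by positivity
    have hEinv : Real.exp (θ * (1 + γ)) * (Real.exp (θ * (1 + γ)))⁻¹ = 1 :=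
      mul_inv_cancel₀ hE.ne'
    nlinarith [h1, hEi, hEinv]
  have hq1' : 0 < 1 - q := by linarith
  refine ⟨(a/θ) ^ a * Real.exp (-a) * (1/(1-q)),
    mul_pos (mul_pos (Real.rpow_pos_of_pos (by positivity) a) (Real.exp_pos _))
      (by positivity), fun n hn => ?_⟩
  have hn0 : (0:ℝ) < n := by exact_mod_cast hn
  have hterm_l : ∀ l ∈ Finset.Icc 1 n,
      (n : ℝ) / l *
        ∫ t in (0 : ℝ)..1,
          (max (t - (1 + γ) / n * l) 0) ^ a *
            ((l : ℝ) * (n.choose l : ℝ) * t ^ (l - 1) * (1 - t) ^ (n - l))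
      ≤ (n:ℝ) * ((a/(θ*n)) ^ a * Real.exp (-a)) * q ^ l := by
    intro l hl
    rw [Finset.mem_Icc] at hl
    obtain ⟨hl1, hln⟩ := hl
    have hl0 : (0:ℝ) < l := by exact_mod_cast hl1
    have hc : 0 < θ * (n:ℝ) := by positivity
    obtain ⟨D, hD⟩ : ∃ D : ℝ, D = (a/(θ*(n:ℝ))) ^ a * Real.exp (-(θ*(1+γ)*l) - a) := ⟨_, rfl⟩
    have hD0 : 0 < D := by rw [hD]; positivity
    -- pointwise bound
    have hpt : ∀ t ∈ Set.Icc (0:ℝ) 1,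
        (max (t - (1 + γ) / n * l) 0) ^ a *
          ((l : ℝ) * (n.choose l : ℝ) * t ^ (l - 1) * (1 - t) ^ (n - l))
        ≤ D * (Real.exp (θ * n * t) * ((l : ℝ) * (n.choose l : ℝ) * t ^ (l - 1) * (1 - t) ^ (n - l))) := by
      intro t ht
      have hf0 : 0 ≤ (l : ℝ) * (n.choose l : ℝ) * t ^ (l - 1) * (1 - t) ^ (n - l) := by
        have h1 : (0:ℝ) ≤ t ^ (l-1) := pow_nonneg ht.1 _
        have h2 : (0:ℝ) ≤ (1-t) ^ (n-l) := pow_nonneg (by linarith [ht.2]) _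
        positivity
      have hb := rpow_le_const_mul_exp ha hc (t - (1 + γ) / n * l)
      have hexp : θ * (n:ℝ) * (t - (1 + γ) / n * l) - a = (-(θ*(1+γ)*l) - a) + θ * n * t := by
        field_simp
        ring
      rw [hexp, Real.exp_add] at hb
      calc (max (t - (1 + γ) / n * l) 0) ^ a *
            ((l : ℝ) * (n.choose l : ℝ) * t ^ (l - 1) * (1 - t) ^ (n - l))
          ≤ ((a/(θ*(n:ℝ))) ^ a * (Real.exp (-(θ*(1+γ)*l) - a) * Real.exp (θ * n * t))) *
            ((l : ℝ) * (n.choose l : ℝ) * t ^ (l - 1) * (1 - t) ^ (n - l)) :=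
            mul_le_mul_of_nonneg_right hb hf0
        _ = D * (Real.exp (θ * n * t) * ((l : ℝ) * (n.choose l : ℝ) * t ^ (l - 1) * (1 - t) ^ (n - l))) := by
            rw [hD]; ring
    have hint1 : IntervalIntegrable
        (fun t : ℝ => (max (t - (1 + γ) / n * l) 0) ^ a *
          ((l : ℝ) * (n.choose l : ℝ) * t ^ (l - 1) * (1 - t) ^ (n - l)))
        MeasureTheory.volume 0 1 := by
      apply Continuous.intervalIntegrable
      apply Continuous.mul _ (by continuity)
      apply Continuous.rpow_const
      · continuity
      · exact fun x => Or.inr ha.le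
    have hint2 : IntervalIntegrable
        (fun t : ℝ => D * (Real.exp (θ * n * t) * ((l : ℝ) * (n.choose l : ℝ) * t ^ (l - 1) * (1 - t) ^ (n - l))))
        MeasureTheory.volume 0 1 := by
      apply Continuous.intervalIntegrable; continuity
    have hmono := intervalIntegral.integral_mono_on zero_le_one hint1 hint2 hpt
    rw [intervalIntegral.integral_const_mul] at hmono
    have hJ := J_bound n l hl1 hln hθ0 hθ1
    have hIle : (∫ t in (0 : ℝ)..1,
        (max (t - (1 + γ) / n * l) 0) ^ a *
          ((l : ℝ) * (n.choose l : ℝ) * t ^ (l - 1) * (1 - t) ^ (n - l)))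
        ≤ D * (1 / (1 - θ)) ^ l :=
      hmono.trans (mul_le_mul_of_nonneg_left hJ hD0.le)
    have hnl : (n:ℝ)/l ≤ (n:ℝ) := by
      have hl1' : (1:ℝ) ≤ (l:ℝ) := by exact_mod_cast hl1
      rw [div_le_iff₀ hl0]
      nlinarith
    have hDq : D * (1 / (1 - θ)) ^ l = (a/(θ*(n:ℝ))) ^ a * Real.exp (-a) * q ^ l := by
      rw [hD, hqdef]
      have : Real.exp (-(θ*(1+γ)*l) - a) = Real.exp (-a) * (Real.exp (-(θ*(1+γ)))) ^ l := by
        rw [← Real.exp_nat_mul, ← Real.exp_add]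
        congr 1
        ring
      rw [this, mul_pow]
      ring
    have h0le : 0 ≤ (n:ℝ)/l := by positivity
    calc (n : ℝ) / l * ∫ t in (0 : ℝ)..1,
          (max (t - (1 + γ) / n * l) 0) ^ a *
            ((l : ℝ) * (n.choose l : ℝ) * t ^ (l - 1) * (1 - t) ^ (n - l))
        ≤ (n:ℝ)/l * (D * (1 / (1 - θ)) ^ l) := mul_le_mul_of_nonneg_left hIle h0le
      _ = (n:ℝ)/l * ((a/(θ*(n:ℝ))) ^ a * Real.exp (-a) * q ^ l) := by rw [hDq]
      _ ≤ (n:ℝ) * ((a/(θ*(n:ℝ))) ^ a * Real.exp (-a) * q ^ l) := by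
          apply mul_le_mul_of_nonneg_right hnl
          positivity
      _ = (n:ℝ) * ((a/(θ*(n:ℝ))) ^ a * Real.exp (-a)) * q ^ l := by ring
  have hsum := Finset.sum_le_sum hterm_l
  have hgeom : (∑ l ∈ Finset.Icc 1 n, q ^ l) ≤ 1/(1-q) := by
    have hs : Summable (fun l : ℕ => q ^ l) := summable_geometric_of_lt_one hq0.le hq1
    calc (∑ l ∈ Finset.Icc 1 n, q ^ l) ≤ ∑' l : ℕ, q ^ l :=
          Summable.sum_le_tsum _ (fun i _ => by positivity) hs
      _ = (1-q)⁻¹ := tsum_geometric_of_lt_one hq0.le hq1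
      _ = 1/(1-q) := (one_div _).symm
  have hfinal : (∑ l ∈ Finset.Icc 1 n, (n:ℝ) * ((a/(θ*n)) ^ a * Real.exp (-a)) * q ^ l)
      ≤ (a/θ) ^ a * Real.exp (-a) * (1/(1-q)) * (n:ℝ) ^ (1 - a) := by
    rw [← Finset.mul_sum]
    have hM : (0:ℝ) ≤ (n:ℝ) * ((a/(θ*n)) ^ a * Real.exp (-a)) := by positivity
    calc (n:ℝ) * ((a/(θ*n)) ^ a * Real.exp (-a)) * (∑ l ∈ Finset.Icc 1 n, q ^ l)
        ≤ (n:ℝ) * ((a/(θ*n)) ^ a * Real.exp (-a)) * (1/(1-q)) :=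
          mul_le_mul_of_nonneg_left hgeom hM
      _ = (a/θ) ^ a * Real.exp (-a) * (1/(1-q)) * (n:ℝ) ^ (1 - a) := by
          have e1 : a/(θ*(n:ℝ)) = (a/θ)/(n:ℝ) := by field_simp
          have e2 : ((a/θ)/(n:ℝ)) ^ a = (a/θ) ^ a / (n:ℝ) ^ a :=
            Real.div_rpow (by positivity) (by positivity) a
          have e3 : (n:ℝ) ^ (1 - a) = (n:ℝ) ^ (1:ℝ) / (n:ℝ) ^ a := Real.rpow_sub hn0 1 a
          have e4 : (n:ℝ) ^ (1:ℝ) = (n:ℝ) := Real.rpow_one _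
          rw [e1, e2, e3, e4]
          have hna : (0:ℝ) < (n:ℝ) ^ a := Real.rpow_pos_of_pos hn0 a
          field_simp
  exact hsum.trans hfinal
end

section
/- Fix real constants a > 0 and δ ∈ (0,1). There exists a constant C > 0 such that for every positive integer n, setting s = (1−δ)/n, Σ_{l=1}^n (n/l) · ∫_0^1 (max(s l − t, 0))^a · l · C(n, l) · t^{l−1} (1−t)^{n−l} dt ≤ C n^{1−a}. (Equivalently, Σ_{l=1}^n (n/l) · E[ (|s l − B_{l,n}|^+)^a ] ≤ C n^{1−a} where B_{l,n} has the Beta(l, n−l+1) distribution.) -/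
open Real

/-- General integral bound: the integrand vanishes for `t ≥ x`, and on `[0,x]` it is
bounded by `x^a * M`. -/
lemma stmt9_int_le {a x M : ℝ} (ha : 0 < a) (hx0 : 0 ≤ x) (hx1 : x ≤ 1) (_hM : 0 ≤ M)
    (φ : ℝ → ℝ) (hφ : Continuous φ)
    (hbd : ∀ t ∈ Set.Icc (0:ℝ) x, 0 ≤ φ t ∧ φ t ≤ M) :
    ∫ t in (0:ℝ)..1, (max (x - t) 0) ^ a * φ t ≤ x ^ a * M * x := by
  have hf : Continuous fun t => (max (x - t) 0) ^ a * φ t :=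
    (((continuous_const.sub continuous_id).max continuous_const).rpow_const
      (fun t => Or.inr ha.le)).mul hφ
  rw [← intervalIntegral.integral_add_adjacent_intervals (a := (0:ℝ)) (b := x) (c := 1)
    (hf.intervalIntegrable _ _) (hf.intervalIntegrable _ _)]
  have h2 : (∫ t in x..(1:ℝ), (max (x - t) 0) ^ a * φ t) = 0 := by
    have : Set.EqOn (fun t => (max (x - t) 0) ^ a * φ t) (fun _ => (0:ℝ)) (Set.uIcc x 1) := by
      intro t ht
      rw [Set.uIcc_of_le hx1] at ht
      have : max (x - t) 0 = 0 := max_eq_right (by linarith [ht.1])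
      simp [this, Real.zero_rpow ha.ne']
    rw [intervalIntegral.integral_congr this, intervalIntegral.integral_zero]
  rw [h2, add_zero]
  calc (∫ t in (0:ℝ)..x, (max (x - t) 0) ^ a * φ t)
      ≤ ∫ _t in (0:ℝ)..x, x ^ a * M := by
        apply intervalIntegral.integral_mono_on hx0 (hf.intervalIntegrable _ _)
          intervalIntegrable_const
        intro t ht
        have h1 : (max (x - t) 0) ^ a ≤ x ^ a := by
          apply Real.rpow_le_rpow (le_max_right _ _) (max_le (by linarith [ht.1]) hx0) ha.le
        exact mul_le_mul h1 (hbd t ht).2 (hbd t ht).1 (Real.rpow_nonneg hx0 a)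
    _ = x ^ a * M * x := by
        rw [intervalIntegral.integral_const]
        simp [smul_eq_mul]; ring

/-- On `[0,x]` with `x` below the mode, `t^(l-1)(1-t)^(n-l)` is maximised at `x`. -/
lemma stmt9_mono {t x : ℝ} {l n : ℕ} (h2 : 2 ≤ l) (hln : l ≤ n)
    (ht0 : 0 ≤ t) (htx : t ≤ x) (hx1 : x < 1) (hx0 : 0 < x)
    (hc : ((n:ℝ) - 1) * x ≤ (l:ℝ) - 1) :
    t ^ (l - 1) * (1 - t) ^ (n - l) ≤ x ^ (l - 1) * (1 - x) ^ (n - l) := by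
  have h1x : (0:ℝ) < 1 - x := by linarith
  rcases eq_or_lt_of_le ht0 with h | h
  · rw [← h, zero_pow (by omega), zero_mul]
    positivity
  · -- t > 0
    have hl1 : ((l:ℝ) - 1) = ((l - 1 : ℕ) : ℝ) := by
      have : (1:ℕ) ≤ l := by omega
      push_cast [Nat.cast_sub this]; ring
    have hnl : ((n:ℝ) - (l:ℝ)) = ((n - l : ℕ) : ℝ) := by
      push_cast [Nat.cast_sub hln]; ring
    have e1 : t ^ (l - 1) = x ^ (l - 1) * (t / x) ^ (l - 1) := by
      rw [← mul_pow, mul_div_cancel₀ _ hx0.ne']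
    have e2 : (1 - t) ^ (n - l) = (1 - x) ^ (n - l) * ((1 - t) / (1 - x)) ^ (n - l) := by
      rw [← mul_pow, mul_div_cancel₀ _ h1x.ne']
    rw [e1, e2]
    have key : (t / x) ^ (l - 1) * ((1 - t) / (1 - x)) ^ (n - l) ≤ 1 := by
      have b1 : t / x ≤ Real.exp ((t - x) / x) := by
        have := Real.add_one_le_exp ((t - x) / x)
        calc t / x = (t - x) / x + 1 := by field_simp; ring
          _ ≤ _ := this
      have b2 : (1 - t) / (1 - x) ≤ Real.exp ((x - t) / (1 - x)) := by
        have := Real.add_one_le_exp ((x - t) / (1 - x))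
        calc (1 - t) / (1 - x) = (x - t) / (1 - x) + 1 := by field_simp; ring
          _ ≤ _ := this
      have p1 : (t / x) ^ (l - 1) ≤ Real.exp ((t - x) / x) ^ (l - 1) :=
        pow_le_pow_left₀ (by positivity) b1 _
      have p2 : ((1 - t) / (1 - x)) ^ (n - l) ≤ Real.exp ((x - t) / (1 - x)) ^ (n - l) :=
        pow_le_pow_left₀ (div_nonneg (by linarith) h1x.le) b2 _
      calc (t / x) ^ (l - 1) * ((1 - t) / (1 - x)) ^ (n - l)
          ≤ Real.exp ((t - x) / x) ^ (l - 1) * Real.exp ((x - t) / (1 - x)) ^ (n - l) := by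
            exact mul_le_mul p1 p2 (pow_nonneg (div_nonneg (by linarith) h1x.le) _) (by positivity)
        _ = Real.exp (((l - 1 : ℕ) : ℝ) * ((t - x) / x) +
              ((n - l : ℕ) : ℝ) * ((x - t) / (1 - x))) := by
            rw [Real.exp_add, Real.exp_nat_mul, Real.exp_nat_mul]
        _ ≤ 1 := by
            rw [Real.exp_le_one_iff, ← hl1, ← hnl, mul_div_assoc', mul_div_assoc',
              div_add_div _ _ hx0.ne' h1x.ne']
            apply div_nonpos_of_nonpos_of_nonneg
            · have hkey : ((n:ℝ) - l) * x ≤ ((l:ℝ) - 1) * (1 - x) := by nlinarith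
              nlinarith [mul_nonneg (sub_nonneg.2 htx) (sub_nonneg.2 hkey)]
            · positivity
    calc x ^ (l - 1) * (t / x) ^ (l - 1) * ((1 - x) ^ (n - l) * ((1 - t) / (1 - x)) ^ (n - l))
        = (x ^ (l - 1) * (1 - x) ^ (n - l)) * ((t / x) ^ (l - 1) * ((1 - t) / (1 - x)) ^ (n - l)) := by
          ring
      _ ≤ (x ^ (l - 1) * (1 - x) ^ (n - l)) * 1 := by
          apply mul_le_mul_of_nonneg_left key (by positivity)
      _ = x ^ (l - 1) * (1 - x) ^ (n - l) := mul_one _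

lemma stmt9_claimA {l n : ℕ} (hln : l ≤ n) (hn : 0 < n) :
    (n.choose l : ℝ) * ((l : ℝ) / n) ^ l * (((n - l : ℕ) : ℝ) / n) ^ (n - l) ≤ 1 := by
  have hnat : n.choose l * l ^ l * (n - l) ^ (n - l) ≤ n ^ n := by
    calc n.choose l * l ^ l * (n - l) ^ (n - l)
        = l ^ l * (n - l) ^ (n - l) * n.choose l := by ring
      _ ≤ ∑ k ∈ Finset.range (n + 1), l ^ k * (n - l) ^ (n - k) * n.choose k := by
          apply Finset.single_le_sum (f := fun k => l ^ k * (n - l) ^ (n - k) * n.choose k)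
            (fun k _ => Nat.zero_le _) (Finset.mem_range.2 (by omega))
      _ = (l + (n - l)) ^ n := (add_pow l (n - l) n).symm
      _ = n ^ n := by rw [Nat.add_sub_cancel' hln]
  have hnn : (0:ℝ) < (n:ℝ) ^ n := by positivity
  have heq : ((l : ℝ) / n) ^ l * (((n - l : ℕ) : ℝ) / n) ^ (n - l)
      = ((l:ℝ) ^ l * ((n - l : ℕ) : ℝ) ^ (n - l)) / (n:ℝ) ^ n := by
    rw [div_pow, div_pow, div_mul_div_comm, ← pow_add, Nat.add_sub_cancel' hln]
  rw [mul_assoc, heq, mul_div_assoc', div_le_one hnn, ← mul_assoc]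
  exact_mod_cast hnat

lemma stmt9_claimB {δ : ℝ} (hδ0 : 0 < δ) {l n : ℕ} (hl : 1 ≤ l) (hln : l ≤ n) (hn : 0 < n) :
    (1 - (1 - δ) / n * l) ^ (n - l) ≤ (((n - l : ℕ) : ℝ) / n) ^ (n - l) * Real.exp δ ^ l := by
  rcases eq_or_lt_of_le hln with h | h
  · subst h
    simp only [Nat.sub_self, pow_zero, one_mul]
    exact one_le_pow₀ (Real.one_le_exp hδ0.le)
  · -- l < n
    have hn0 : (0:ℝ) < n := by exact_mod_cast hn
    have hnl0 : (0:ℝ) < ((n - l : ℕ) : ℝ) := by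
      have : 0 < n - l := by omega
      exact_mod_cast this
    have hcast : ((n - l : ℕ) : ℝ) = (n:ℝ) - l := by
      push_cast [Nat.cast_sub hln]; ring
    have hxeq : 1 - (1 - δ) / n * l
        = ((n - l : ℕ) : ℝ) / n * (1 + δ * l / ((n - l : ℕ) : ℝ)) := by
      have hne : (n:ℝ) - (l:ℝ) ≠ 0 := by rw [← hcast]; exact hnl0.ne'
      rw [hcast]
      field_simp
      ring
    rw [hxeq, mul_pow]
    apply mul_le_mul_of_nonneg_left _ (by positivity)
    calc (1 + δ * l / ((n - l : ℕ) : ℝ)) ^ (n - l)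
        ≤ Real.exp (δ * l / ((n - l : ℕ) : ℝ)) ^ (n - l) := by
          apply pow_le_pow_left₀ (by positivity) _ _
          have := Real.add_one_le_exp (δ * l / ((n - l : ℕ) : ℝ))
          linarith
      _ = Real.exp (((n - l : ℕ) : ℝ) * (δ * l / ((n - l : ℕ) : ℝ))) := by
          rw [Real.exp_nat_mul]
      _ = Real.exp (δ * l) := by rw [mul_div_cancel₀ _ hnl0.ne']
      _ = Real.exp δ ^ l := by rw [← Real.exp_nat_mul]; ring_nf

lemma stmt9_pmf {δ : ℝ} (hδ0 : 0 < δ) (hδ1 : δ < 1) {l n : ℕ}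
    (hl : 1 ≤ l) (hln : l ≤ n) (hn : 0 < n) :
    (n.choose l : ℝ) * ((1 - δ) / n * l) ^ l * (1 - (1 - δ) / n * l) ^ (n - l)
      ≤ ((1 - δ) * Real.exp δ) ^ l := by
  have hn0 : (0:ℝ) < n := by exact_mod_cast hn
  have hδ' : (0:ℝ) < 1 - δ := by linarith
  have hxeq : (1 - δ) / (n:ℝ) * l = (1 - δ) * ((l:ℝ) / n) := by ring
  have hxl : ((1 - δ) / (n:ℝ) * l) ^ l = (1 - δ) ^ l * ((l:ℝ) / n) ^ l := by
    rw [hxeq, mul_pow]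
  calc (n.choose l : ℝ) * ((1 - δ) / n * l) ^ l * (1 - (1 - δ) / n * l) ^ (n - l)
      ≤ (n.choose l : ℝ) * ((1 - δ) / n * l) ^ l *
          ((((n - l : ℕ) : ℝ) / n) ^ (n - l) * Real.exp δ ^ l) := by
        apply mul_le_mul_of_nonneg_left (stmt9_claimB hδ0 hl hln hn)
        positivity
    _ = ((1 - δ) ^ l * Real.exp δ ^ l) *
          ((n.choose l : ℝ) * ((l : ℝ) / n) ^ l * (((n - l : ℕ) : ℝ) / n) ^ (n - l)) := by
        rw [hxl]; ring
    _ ≤ ((1 - δ) ^ l * Real.exp δ ^ l) * 1 := by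
        apply mul_le_mul_of_nonneg_left (stmt9_claimA hln hn)
        positivity
    _ = ((1 - δ) * Real.exp δ) ^ l := by rw [mul_one, ← mul_pow]

/-- with `s = (1-δ)/n`,
`Σ_{l=1}^n (n/l) · ∫₀¹ (max (sl - t) 0)^a · l·C(n,l)·t^{l-1}(1-t)^{n-l} dt ≤ C n^{1-a}`. -/
theorem stmt_9 (a δ : ℝ) (ha : 0 < a) (hδ0 : 0 < δ) (hδ1 : δ < 1) :
    ∃ C > 0, ∀ n : ℕ, 0 < n →
      ∑ l ∈ Finset.Icc 1 n,
          (n : ℝ) / l *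
            ∫ t in (0 : ℝ)..1,
              (max ((1 - δ) / n * l - t) 0) ^ a *
                ((l : ℝ) * (n.choose l : ℝ) * t ^ (l - 1) * (1 - t) ^ (n - l))
        ≤ C * (n : ℝ) ^ (1 - a) := by
  have hδ' : (0:ℝ) < 1 - δ := by linarith
  set q := (1 - δ) * Real.exp δ with hqdef
  have hq0 : 0 < q := by positivity
  have hq1 : q < 1 := by
    have h := Real.add_one_lt_exp (x := -δ) (by intro h; rw [neg_eq_zero] at h; linarith)
    have he : Real.exp (-δ) * Real.exp δ = 1 := by rw [← Real.exp_add]; simp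
    nlinarith [Real.exp_pos δ, Real.exp_pos (-δ)]
  set m := ⌈a⌉₊ with hmdef
  set L := ⌈1/δ⌉₊ with hLdef
  have hL1 : (1:ℝ) ≤ δ * L := by
    have h1 := Nat.le_ceil (1/δ)
    calc (1:ℝ) = δ * (1/δ) := by field_simp
      _ ≤ δ * L := by exact mul_le_mul_of_nonneg_left h1 hδ0.le
  have hLpos : 0 < L := by
    rcases Nat.eq_zero_or_pos L with h | h
    · exfalso; rw [h] at hL1; norm_num at hL1
    · exact h
  have hsummable : Summable (fun l : ℕ => (l:ℝ)^m * q^l) :=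
    summable_pow_mul_geometric_of_norm_lt_one m
      (by rw [Real.norm_eq_abs, abs_of_pos hq0]; exact hq1)
  set K := ∑' l : ℕ, (l:ℝ)^m * q^l with hKdef
  have hK0 : 0 ≤ K := tsum_nonneg (fun l => by positivity)
  set A := (L:ℝ)^L * (L:ℝ)^(a:ℝ) with hAdef
  have hA0 : 0 ≤ A := by positivity
  refine ⟨A * L + K + 1, by positivity, fun n hn => ?_⟩
  have hn0 : (0:ℝ) < n := by exact_mod_cast hn
  have hpow : (0:ℝ) < (n:ℝ)^(1-a) := Real.rpow_pos_of_pos hn0 _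
  have hchoose : ∀ l : ℕ, (n.choose l : ℝ) ≤ (n:ℝ)^l := by
    intro l
    calc (n.choose l : ℝ) ≤ (n:ℝ)^l / l.factorial := Nat.choose_le_pow_div l n
      _ ≤ (n:ℝ)^l := by
          apply div_le_self (by positivity)
          exact_mod_cast l.factorial_pos
  calc ∑ l ∈ Finset.Icc 1 n,
          (n : ℝ) / l *
            ∫ t in (0 : ℝ)..1,
              (max ((1 - δ) / n * l - t) 0) ^ a *
                ((l : ℝ) * (n.choose l : ℝ) * t ^ (l - 1) * (1 - t) ^ (n - l))
      ≤ ∑ l ∈ Finset.Icc 1 n, (n:ℝ)^(1-a) * (if l ≤ L then A else (l:ℝ)^m * q^l) := by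
        apply Finset.sum_le_sum
        intro l hl
        obtain ⟨hl1, hln⟩ := Finset.mem_Icc.mp hl
        set x := (1 - δ) / (n:ℝ) * l with hxdef
        have hl0 : (0:ℝ) < l := by exact_mod_cast hl1
        have hx0 : 0 < x := by positivity
        have hln' : (l:ℝ) ≤ n := by exact_mod_cast hln
        have hlen : (l:ℝ)/n ≤ 1 := by rw [div_le_one hn0]; exact hln'
        have hxle : x ≤ (l:ℝ)/n := by
          calc x = (1-δ) * ((l:ℝ)/n) := by rw [hxdef]; ring
            _ ≤ 1 * ((l:ℝ)/n) := by
                apply mul_le_mul_of_nonneg_right (by linarith) (by positivity)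
            _ = (l:ℝ)/n := one_mul _
        have hx1 : x < 1 := by
          calc x = (1-δ) * ((l:ℝ)/n) := by rw [hxdef]; ring
            _ ≤ (1-δ) * 1 := mul_le_mul_of_nonneg_left hlen hδ'.le
            _ < 1 := by linarith
        have hxa : 0 ≤ x ^ a := Real.rpow_nonneg hx0.le a
        have hxan : x ^ a ≤ ((l:ℝ)/n) ^ a := Real.rpow_le_rpow hx0.le hxle ha.le
        have h1x : (0:ℝ) ≤ 1 - x := by linarith
        have hc0 : (0:ℝ) ≤ (l:ℝ) * (n.choose l : ℝ) := by positivity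
        have hφ : Continuous (fun t : ℝ => (l:ℝ) * (n.choose l : ℝ) * t ^ (l-1) * (1-t) ^ (n-l)) := by
          fun_prop
        have hxl : x ^ (l-1) * x = x ^ l := by
          rw [← pow_succ]; congr 1; omega
        have hfrac : (n:ℝ) * ((l:ℝ)/n) ^ a = (l:ℝ) ^ a * (n:ℝ) ^ (1-a) := by
          rw [Real.div_rpow hl0.le hn0.le, Real.rpow_sub hn0, Real.rpow_one]
          field_simp
        by_cases hcase : l ≤ L
        · -- small l
          have hM : ∀ t ∈ Set.Icc (0:ℝ) x,
              0 ≤ (l:ℝ) * (n.choose l : ℝ) * t ^ (l-1) * (1-t) ^ (n-l) ∧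
              (l:ℝ) * (n.choose l : ℝ) * t ^ (l-1) * (1-t) ^ (n-l)
                ≤ (l:ℝ) * (n.choose l : ℝ) * x ^ (l-1) * 1 := by
            intro t ht
            have ht0 := ht.1
            have htx := ht.2
            have ht1 : t ≤ 1 := le_trans htx hx1.le
            constructor
            · apply mul_nonneg (mul_nonneg hc0 (pow_nonneg ht0 _)) (pow_nonneg (by linarith) _)
            · apply mul_le_mul
                (mul_le_mul_of_nonneg_left (pow_le_pow_left₀ ht0 htx _) hc0)
                (pow_le_one₀ (by linarith) (by linarith))
                (pow_nonneg (by linarith) _) (by positivity)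
          have hI := stmt9_int_le ha hx0.le hx1.le (by positivity) _ hφ hM
          have hrw : (n:ℝ)/l * (x^a * ((l:ℝ) * (n.choose l : ℝ) * x ^ (l-1) * 1) * x)
              = (n:ℝ) * (n.choose l : ℝ) * (x ^ (l-1) * x) * x^a := by
            field_simp
          rw [if_pos hcase]
          calc (n:ℝ)/l * ∫ t in (0:ℝ)..1,
                  (max (x - t) 0) ^ a *
                    ((l : ℝ) * (n.choose l : ℝ) * t ^ (l - 1) * (1 - t) ^ (n - l))
              ≤ (n:ℝ)/l * (x^a * ((l:ℝ) * (n.choose l : ℝ) * x ^ (l-1) * 1) * x) :=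
                mul_le_mul_of_nonneg_left hI (by positivity)
            _ = (n:ℝ) * (n.choose l : ℝ) * x ^ l * x^a := by rw [hrw, hxl]
            _ ≤ (n:ℝ) * (n:ℝ)^l * ((l:ℝ)/n) ^ l * ((l:ℝ)/n) ^ a := by
                apply mul_le_mul _ hxan hxa (by positivity)
                apply mul_le_mul
                  (mul_le_mul_of_nonneg_left (hchoose l) hn0.le)
                  (pow_le_pow_left₀ hx0.le hxle l) (by positivity) (by positivity)
            _ = (l:ℝ)^l * ((l:ℝ)^a * (n:ℝ)^(1-a)) := by
                have hnl : (n:ℝ)^l ≠ 0 := by positivity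
                rw [div_pow]
                calc (n:ℝ) * (n:ℝ)^l * ((l:ℝ)^l/(n:ℝ)^l) * ((l:ℝ)/(n:ℝ))^a
                    = (l:ℝ)^l * ((n:ℝ) * ((l:ℝ)/(n:ℝ))^a) := by field_simp
                  _ = (l:ℝ)^l * ((l:ℝ)^a * (n:ℝ)^(1-a)) := by rw [hfrac]
            _ ≤ (n:ℝ)^(1-a) * A := by
                have e1 : (l:ℝ)^l ≤ (L:ℝ)^L := by
                  calc (l:ℝ)^l ≤ (L:ℝ)^l :=
                        pow_le_pow_left₀ hl0.le (by exact_mod_cast hcase) l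
                    _ ≤ (L:ℝ)^L := by
                        apply pow_le_pow_right₀ _ hcase
                        have : (1:ℕ) ≤ L := hLpos
                        exact_mod_cast this
                have e2 : (l:ℝ)^a ≤ (L:ℝ)^a :=
                  Real.rpow_le_rpow hl0.le (by exact_mod_cast hcase) ha.le
                have e3 : (0:ℝ) ≤ (L:ℝ)^a := Real.rpow_nonneg (by positivity) a
                calc (l:ℝ)^l * ((l:ℝ)^a * (n:ℝ)^(1-a))
                    ≤ (L:ℝ)^L * ((L:ℝ)^a * (n:ℝ)^(1-a)) := by
                      apply mul_le_mul e1 (mul_le_mul_of_nonneg_right e2 hpow.le)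
                        (by positivity) (by positivity)
                  _ = (n:ℝ)^(1-a) * A := by rw [hAdef]; ring
        · -- large l
          have hlL : L < l := not_le.mp hcase
          have hl2 : 2 ≤ l := by omega
          have hδl : (1:ℝ) ≤ δ * l := by
            have : (L:ℝ) ≤ l := by exact_mod_cast hlL.le
            calc (1:ℝ) ≤ δ * L := hL1
              _ ≤ δ * l := mul_le_mul_of_nonneg_left this hδ0.le
          have hnx : (n:ℝ) * x = (1-δ) * l := by
            rw [hxdef]; field_simp
          have hmode : ((n:ℝ) - 1) * x ≤ (l:ℝ) - 1 := by nlinarith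
          have hM : ∀ t ∈ Set.Icc (0:ℝ) x,
              0 ≤ (l:ℝ) * (n.choose l : ℝ) * t ^ (l-1) * (1-t) ^ (n-l) ∧
              (l:ℝ) * (n.choose l : ℝ) * t ^ (l-1) * (1-t) ^ (n-l)
                ≤ (l:ℝ) * (n.choose l : ℝ) * x ^ (l-1) * (1-x) ^ (n-l) := by
            intro t ht
            have ht0 := ht.1
            have htx := ht.2
            have ht1 : t ≤ 1 := le_trans htx hx1.le
            constructor
            · apply mul_nonneg (mul_nonneg hc0 (pow_nonneg ht0 _)) (pow_nonneg (by linarith) _)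
            · have hmono := stmt9_mono hl2 hln ht0 htx hx1 hx0 hmode
              calc (l:ℝ) * (n.choose l : ℝ) * t ^ (l-1) * (1-t) ^ (n-l)
                  = (l:ℝ) * (n.choose l : ℝ) * (t ^ (l-1) * (1-t) ^ (n-l)) := by ring
                _ ≤ (l:ℝ) * (n.choose l : ℝ) * (x ^ (l-1) * (1-x) ^ (n-l)) :=
                    mul_le_mul_of_nonneg_left hmono hc0
                _ = (l:ℝ) * (n.choose l : ℝ) * x ^ (l-1) * (1-x) ^ (n-l) := by ring
          have hMnn : (0:ℝ) ≤ (l:ℝ) * (n.choose l : ℝ) * x ^ (l-1) * (1-x) ^ (n-l) :=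
            mul_nonneg (mul_nonneg hc0 (pow_nonneg hx0.le _)) (pow_nonneg h1x _)
          have hI := stmt9_int_le ha hx0.le hx1.le hMnn _ hφ hM
          have hrw : (n:ℝ)/l * (x^a * ((l:ℝ) * (n.choose l : ℝ) * x ^ (l-1) * (1-x) ^ (n-l)) * x)
              = (n:ℝ) * ((n.choose l : ℝ) * (x ^ (l-1) * x) * (1-x) ^ (n-l)) * x^a := by
            field_simp
          have hpmf : (n.choose l : ℝ) * x ^ l * (1-x) ^ (n-l) ≤ q ^ l := by
            rw [hxdef, hqdef]
            exact stmt9_pmf hδ0 hδ1 hl1 hln hn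
          have hql : (0:ℝ) ≤ q ^ l := by positivity
          have hlm : (l:ℝ)^a ≤ (l:ℝ)^m := by
            have h1l : (1:ℝ) ≤ l := by exact_mod_cast hl1
            calc (l:ℝ)^a ≤ (l:ℝ)^(m:ℝ) :=
                  Real.rpow_le_rpow_of_exponent_le h1l (Nat.le_ceil a)
              _ = (l:ℝ)^m := Real.rpow_natCast _ m
          rw [if_neg hcase]
          calc (n:ℝ)/l * ∫ t in (0:ℝ)..1,
                  (max (x - t) 0) ^ a *
                    ((l : ℝ) * (n.choose l : ℝ) * t ^ (l - 1) * (1 - t) ^ (n - l))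
              ≤ (n:ℝ)/l * (x^a * ((l:ℝ) * (n.choose l : ℝ) * x ^ (l-1) * (1-x) ^ (n-l)) * x) :=
                mul_le_mul_of_nonneg_left hI (by positivity)
            _ = (n:ℝ) * ((n.choose l : ℝ) * x ^ l * (1-x) ^ (n-l)) * x^a := by
                rw [hrw, hxl]
            _ ≤ (n:ℝ) * q ^ l * x^a := by
                apply mul_le_mul_of_nonneg_right _ hxa
                exact mul_le_mul_of_nonneg_left hpmf hn0.le
            _ ≤ (n:ℝ) * q ^ l * ((l:ℝ)/n) ^ a := by
                apply mul_le_mul_of_nonneg_left hxan (by positivity)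
            _ = ((l:ℝ)^a * q ^ l) * (n:ℝ)^(1-a) := by
                calc (n:ℝ) * q ^ l * ((l:ℝ)/n) ^ a
                    = q ^ l * ((n:ℝ) * ((l:ℝ)/n) ^ a) := by ring
                  _ = q ^ l * ((l:ℝ)^a * (n:ℝ)^(1-a)) := by rw [hfrac]
                  _ = ((l:ℝ)^a * q ^ l) * (n:ℝ)^(1-a) := by ring
            _ ≤ (n:ℝ)^(1-a) * ((l:ℝ)^m * q^l) := by
                calc ((l:ℝ)^a * q ^ l) * (n:ℝ)^(1-a)
                    ≤ ((l:ℝ)^m * q ^ l) * (n:ℝ)^(1-a) := by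
                      apply mul_le_mul_of_nonneg_right
                        (mul_le_mul_of_nonneg_right hlm hql) hpow.le
                  _ = (n:ℝ)^(1-a) * ((l:ℝ)^m * q^l) := by ring
    _ = (n:ℝ)^(1-a) * ∑ l ∈ Finset.Icc 1 n, (if l ≤ L then A else (l:ℝ)^m * q^l) := by
        rw [Finset.mul_sum]
    _ ≤ (n:ℝ)^(1-a) * (A * L + K) := by
        apply mul_le_mul_of_nonneg_left _ hpow.le
        calc ∑ l ∈ Finset.Icc 1 n, (if l ≤ L then A else (l:ℝ)^m * q^l)
            ≤ ∑ l ∈ Finset.Icc 1 n, ((if l ≤ L then A else 0) + (l:ℝ)^m * q^l) := by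
              apply Finset.sum_le_sum
              intro l _
              split_ifs with h
              · exact le_add_of_nonneg_right (by positivity)
              · rw [zero_add]
          _ = (∑ l ∈ Finset.Icc 1 n, (if l ≤ L then A else 0))
                + ∑ l ∈ Finset.Icc 1 n, (l:ℝ)^m * q^l := Finset.sum_add_distrib
          _ ≤ A * L + K := by
              apply add_le_add
              · rw [← Finset.sum_filter, Finset.sum_const, nsmul_eq_mul]
                have hsub : (Finset.Icc 1 n).filter (· ≤ L) ⊆ Finset.Icc 1 L := by
                  intro y hy
                  simp only [Finset.mem_filter, Finset.mem_Icc] at hy ⊢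
                  exact ⟨hy.1.1, hy.2⟩
                have hcard : ((Finset.Icc 1 n).filter (· ≤ L)).card ≤ L := by
                  calc ((Finset.Icc 1 n).filter (· ≤ L)).card ≤ (Finset.Icc 1 L).card :=
                        Finset.card_le_card hsub
                    _ = L := by rw [Nat.card_Icc]; omega
                calc (((Finset.Icc 1 n).filter (· ≤ L)).card : ℝ) * A ≤ (L:ℝ) * A := by
                      apply mul_le_mul_of_nonneg_right _ hA0
                      exact_mod_cast hcard
                  _ = A * L := mul_comm _ _
              · exact Summable.sum_le_tsum (Finset.Icc 1 n) (fun i _ => by positivity) hsummable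
    _ ≤ (A * L + K + 1) * (n:ℝ)^(1-a) := by
        rw [mul_comm]
        exact mul_le_mul_of_nonneg_right (by linarith) hpow.le
end

section
/- Let a > 0 be a real number that is not an integer. Then (Γ(a+1)/π) · cos((a+1)π/2) · ( √π / 2^{1 + 3a/2} ) · cot(aπ/2) · Γ(−1/2 − a/2) = Γ(a/2 + 1) / ( 2^{a/2} (a+1) ), where Γ is the real Gamma function. -/
open Real

/-- for `a > 0` not an integer,
`(Γ(a+1)/π) cos((a+1)π/2) (√π / 2^{1+3a/2}) cot(aπ/2) Γ(-1/2-a/2)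
  = Γ(a/2+1) / (2^{a/2}(a+1))`. -/
theorem stmt_11 (a : ℝ) (ha : 0 < a) (hna : ∀ m : ℤ, a ≠ (m : ℝ)) :
    Real.Gamma (a + 1) / π * Real.cos ((a + 1) * π / 2) *
        (Real.sqrt π / 2 ^ (1 + 3 * a / 2)) * Real.cot (a * π / 2) *
        Real.Gamma (-1 / 2 - a / 2) =
      Real.Gamma (a / 2 + 1) / (2 ^ (a / 2) * (a + 1)) := by
  have hpi : (π : ℝ) ≠ 0 := Real.pi_ne_zero
  -- sin (a*π/2) ≠ 0
  have hsin : Real.sin (a * π / 2) ≠ 0 := by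
    intro h
    obtain ⟨n, hn⟩ := Real.sin_eq_zero_iff.mp h
    apply hna (2 * n)
    have h2 : (2 * (n : ℝ) - a) * π = 0 := by
      have : (n : ℝ) * π = a * π / 2 := hn
      nlinarith [this]
    rcases mul_eq_zero.mp h2 with h3 | h3
    · push_cast; linarith
    · exact absurd h3 hpi
  -- cos (a*π/2) ≠ 0
  have hcos : Real.cos (a * π / 2) ≠ 0 := by
    intro h
    obtain ⟨k, hk⟩ := Real.cos_eq_zero_iff.mp h
    apply hna (2 * k + 1)
    have h2 : (a - (2 * (k : ℝ) + 1)) * π = 0 := by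
      have : a * π / 2 = (2 * (k : ℝ) + 1) * π / 2 := hk
      nlinarith [this]
    rcases mul_eq_zero.mp h2 with h3 | h3
    · push_cast; linarith
    · exact absurd h3 hpi
  -- cos ((a+1)*π/2) = - sin (a*π/2)
  have hc1 : Real.cos ((a + 1) * π / 2) = -Real.sin (a * π / 2) := by
    have : (a + 1) * π / 2 = a * π / 2 + π / 2 := by ring
    rw [this, Real.cos_add_pi_div_two]
  -- reflection: Γ(-1/2-a/2) * Γ(3/2+a/2) = π / (-cos (a*π/2))
  have hrefl := Real.Gamma_mul_Gamma_one_sub (-1 / 2 - a / 2)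
  have hsin' : Real.sin (π * (-1 / 2 - a / 2)) = -Real.cos (a * π / 2) := by
    have : π * (-1 / 2 - a / 2) = -(a * π / 2 + π / 2) := by ring
    rw [this, Real.sin_neg, Real.sin_add_pi_div_two]
  rw [hsin'] at hrefl
  have h1s : (1 : ℝ) - (-1 / 2 - a / 2) = a / 2 + 1 + 1 / 2 := by ring
  rw [h1s] at hrefl
  -- duplication with s = (a+1)/2
  have hdup := Real.Gamma_mul_Gamma_add_half ((a + 1) / 2)
  have h2s : 2 * ((a + 1) / 2) = a + 1 := by ring
  rw [h2s] at hdup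
  have h2s' : (1 : ℝ) - (a + 1) = -a := by ring
  rw [h2s'] at hdup
  have hhalf : (a + 1) / 2 + 1 / 2 = a / 2 + 1 := by ring
  rw [hhalf] at hdup
  -- Gamma recurrence: Γ(a/2+1+1/2) = (a/2+1/2) Γ(a/2+1/2)
  have hrec : Real.Gamma (a / 2 + 1 + 1 / 2) = (a / 2 + 1 / 2) * Real.Gamma ((a + 1) / 2) := by
    have := Real.Gamma_add_one (s := a / 2 + 1 / 2) (by positivity)
    have he : a / 2 + 1 / 2 + 1 = a / 2 + 1 + 1 / 2 := by ring
    have he2 : a / 2 + 1 / 2 = (a + 1) / 2 := by ring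
    rw [he, he2] at this
    exact this.trans (by rw [he2])
  -- positivity of Gammas
  have hG1 : 0 < Real.Gamma ((a + 1) / 2) := Real.Gamma_pos_of_pos (by linarith)
  have hG2 : 0 < Real.Gamma (a / 2 + 1) := Real.Gamma_pos_of_pos (by linarith)
  have hsqrt : Real.sqrt π ≠ 0 := by positivity
  have hG3 : Real.Gamma (a / 2 + 1 + 1 / 2) ≠ 0 := by
    rw [hrec]; positivity
  have hGneg : Real.Gamma (-1 / 2 - a / 2) =
      π / (-Real.cos (a * π / 2)) / Real.Gamma (a / 2 + 1 + 1 / 2) :=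
    (eq_div_iff hG3).mpr hrefl
  have hden : (2 : ℝ) ^ (-a : ℝ) * Real.sqrt π ≠ 0 := by
    have := Real.rpow_pos_of_pos two_pos (-a); positivity
  have hGa1 : Real.Gamma (a + 1) =
      Real.Gamma ((a + 1) / 2) * Real.Gamma (a / 2 + 1) / ((2 : ℝ) ^ (-a : ℝ) * Real.sqrt π) :=
    (eq_div_iff hden).mpr (by linear_combination -hdup)
  rw [Real.cot_eq_cos_div_sin, hc1, hGneg, hrec, hGa1]
  have hp3 : (0 : ℝ) < (2 : ℝ) ^ (a / 2) := Real.rpow_pos_of_pos two_pos _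
  have hpA : (2 : ℝ) ^ (1 + 3 * a / 2) = 2 * ((2 : ℝ) ^ (a / 2)) ^ 3 := by
    rw [Real.rpow_add two_pos, Real.rpow_one, ← Real.rpow_natCast ((2:ℝ) ^ (a/2)) 3,
      ← Real.rpow_mul (by norm_num : (0:ℝ) ≤ 2)]
    push_cast
    ring_nf
  have hpB : (2 : ℝ) ^ (-a : ℝ) = (((2 : ℝ) ^ (a / 2)) ^ 2)⁻¹ := by
    rw [← Real.rpow_natCast ((2:ℝ) ^ (a/2)) 2, ← Real.rpow_mul (by norm_num : (0:ℝ) ≤ 2),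
      ← Real.rpow_neg (by norm_num : (0:ℝ) ≤ 2)]
    norm_num
  rw [hpA, hpB]
  set G1 := Real.Gamma ((a + 1) / 2) with hG1d
  set G2 := Real.Gamma (a / 2 + 1) with hG2d
  set sn := Real.sin (a * π / 2) with hsnd
  set cs := Real.cos (a * π / 2) with hcsd
  set sp := Real.sqrt π with hspd
  set p := (2 : ℝ) ^ (a / 2) with hpd
  have hA1 : a + 1 ≠ 0 := by linarith
  have hA2 : a / 2 + 1 / 2 ≠ 0 := by linarith
  field_simp
end

section
/- Let n be a positive integer, let 0 ≤ j ≤ n be an integer, let x ∈ [0,1), and let m₁ be a positive integer satisfying n(1−x) − 1 < m₁ ≤ n(1−x). Then C(n, j) x^j (1−x)^{n−j} ≤ (n/m₁)^{1/2} · e^{−nx} · (nx)^j / j!. -/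
open Real

private lemma fact_le_aux (m : ℕ) : ∀ d, d ≤ m → m.factorial ≤ (m - d).factorial * m ^ d := by
  intro d
  induction d with
  | zero => simp
  | succ d ih =>
    intro hd
    have hd' : d ≤ m := by omega
    have h1 := ih hd'
    have h2 : m - d = (m - (d + 1)) + 1 := by omega
    calc m.factorial ≤ (m - d).factorial * m ^ d := h1
      _ = ((m - (d + 1)).factorial * (m - d)) * m ^ d := by
          rw [h2, Nat.factorial_succ, ← h2]; ring
      _ ≤ ((m - (d + 1)).factorial * m) * m ^ d := by
          gcongr; omega
      _ = (m - (d + 1)).factorial * m ^ (d + 1) := by ring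

private lemma fact_mul_pow_le (m k : ℕ) (h : k ≤ m) :
    m.factorial * m ^ k ≤ k.factorial * m ^ m := by
  have h1 := fact_le_aux m (m - k) (by omega)
  have h2 : m - (m - k) = k := by omega
  rw [h2] at h1
  calc m.factorial * m ^ k ≤ (k.factorial * m ^ (m - k)) * m ^ k := by gcongr
    _ = k.factorial * m ^ ((m - k) + k) := by rw [pow_add]; ring
    _ = k.factorial * m ^ m := by rw [Nat.sub_add_cancel h]

private lemma poisson_max (k : ℕ) (t : ℝ) (ht : 0 ≤ t) :
    t ^ k * exp (-t) ≤ (k : ℝ) ^ k * exp (-(k : ℝ)) := by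
  rcases Nat.eq_zero_or_pos k with hk | hk
  · subst hk
    simpa using Real.exp_le_exp.mpr (by linarith : -t ≤ -(0:ℝ))
  · have hkr : (0:ℝ) < (k : ℝ) := by exact_mod_cast hk
    have h1 : t / k ≤ exp (t / k - 1) := by
      have := Real.add_one_le_exp (t / k - 1); linarith
    have h2 : (t / k) ^ k ≤ exp (t / k - 1) ^ k :=
      pow_le_pow_left₀ (div_nonneg ht hkr.le) h1 k
    have h3 : exp (t / k - 1) ^ k = exp (t - k) := by
      rw [← Real.exp_nat_mul]
      congr 1
      field_simp
    have h4 : t ^ k = (t / k) ^ k * (k : ℝ) ^ k := by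
      rw [div_pow]; field_simp
    calc t ^ k * exp (-t) = (t / k) ^ k * ((k:ℝ) ^ k * exp (-t)) := by rw [h4]; ring
      _ ≤ exp (t - k) * ((k:ℝ) ^ k * exp (-t)) := by
          apply mul_le_mul_of_nonneg_right (h2.trans h3.le) (by positivity)
      _ = (k:ℝ) ^ k * (exp (t - k) * exp (-t)) := by ring
      _ = (k:ℝ) ^ k * exp (-(k:ℝ)) := by rw [← Real.exp_add]; ring_nf

private lemma poisson_mono (k : ℕ) (c t : ℝ) (hc : 0 < c) (hk : (k : ℝ) ≤ c) (hct : c ≤ t) :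
    t ^ k * exp (-t) ≤ c ^ k * exp (-c) := by
  have ht : 0 ≤ t := by linarith
  have h1 : t / c ≤ exp (t / c - 1) := by
    have := Real.add_one_le_exp (t / c - 1); linarith
  have h2 : (t / c) ^ k ≤ exp (t / c - 1) ^ k :=
    pow_le_pow_left₀ (div_nonneg ht hc.le) h1 k
  have h3 : exp (t / c - 1) ^ k = exp ((k:ℝ) * (t / c - 1)) :=
    (Real.exp_nat_mul _ k).symm
  have h5 : (k:ℝ) * (t / c - 1) ≤ t - c := by
    have e : (k:ℝ) * (t / c - 1) = ((k:ℝ) / c) * (t - c) := by field_simp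
    have hkc : (k:ℝ) / c ≤ 1 := (div_le_one hc).mpr hk
    have htc : (0:ℝ) ≤ t - c := sub_nonneg.mpr hct
    rw [e]
    nlinarith
  have h4 : t ^ k = (t / c) ^ k * c ^ k := by
    rw [div_pow]; field_simp
  calc t ^ k * exp (-t) = (t / c) ^ k * (c ^ k * exp (-t)) := by rw [h4]; ring
    _ ≤ exp (t - c) * (c ^ k * exp (-t)) := by
        apply mul_le_mul_of_nonneg_right _ (by positivity)
        exact (h2.trans h3.le).trans (Real.exp_le_exp.mpr h5)
    _ = c ^ k * (exp (t - c) * exp (-t)) := by ring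
    _ = c ^ k * exp (-c) := by rw [← Real.exp_add]; ring_nf

private lemma stirling_le (a n : ℕ) (ha : 1 ≤ a) (han : a ≤ n) :
    Stirling.stirlingSeq n ≤ Stirling.stirlingSeq a := by
  obtain ⟨a', rfl⟩ : ∃ a', a = a' + 1 := ⟨a - 1, by omega⟩
  obtain ⟨n', rfl⟩ : ∃ n', n = n' + 1 := ⟨n - 1, by omega⟩
  have hmono := Stirling.log_stirlingSeq'_antitone (show a' ≤ n' by omega)
  simp only [Function.comp] at hmono
  have hpa := Stirling.stirlingSeq'_pos a'
  have hpn := Stirling.stirlingSeq'_pos n'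
  exact (Real.log_le_log_iff hpn hpa).mp hmono

private lemma exp_pow_eq (a : ℕ) (ha : (0:ℝ) < a) :
    ((a:ℝ) / exp 1) ^ a = (a:ℝ) ^ a * exp (-(a:ℝ)) := by
  rw [div_pow, ← Real.exp_nat_mul, mul_one, Real.exp_neg, div_eq_mul_inv]

private lemma stirling_ineq (a n : ℕ) (ha : 1 ≤ a) (han : a ≤ n) :
    (n.factorial : ℝ) * (a:ℝ) ^ a * exp (-(a:ℝ)) * Real.sqrt a ≤
      Real.sqrt n * (n:ℝ) ^ n * exp (-(n:ℝ)) * a.factorial := by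
  have h := stirling_le a n ha han
  unfold Stirling.stirlingSeq at h
  have hn : 1 ≤ n := le_trans ha han
  have hna : (0:ℝ) < (a:ℝ) := by exact_mod_cast ha
  have hnn : (0:ℝ) < (n:ℝ) := by exact_mod_cast hn
  have hda : (0:ℝ) < Real.sqrt (2 * a) * ((a:ℝ) / exp 1) ^ a := by positivity
  have hdn : (0:ℝ) < Real.sqrt (2 * n) * ((n:ℝ) / exp 1) ^ n := by positivity
  rw [div_le_div_iff₀ hdn hda] at h
  rw [exp_pow_eq a hna, exp_pow_eq n hnn] at h
  rw [show (2 * (a:ℝ)) = 2 * (a:ℝ) from rfl, Real.sqrt_mul (by norm_num : (0:ℝ) ≤ 2),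
    Real.sqrt_mul (by norm_num : (0:ℝ) ≤ 2) (n:ℝ)] at h
  have h2 : (0:ℝ) < Real.sqrt 2 := by positivity
  refine le_of_mul_le_mul_left ?_ h2
  calc Real.sqrt 2 * ((n.factorial : ℝ) * (a:ℝ) ^ a * exp (-(a:ℝ)) * Real.sqrt a)
      = (n.factorial : ℝ) * (Real.sqrt 2 * Real.sqrt a * ((a:ℝ) ^ a * exp (-(a:ℝ)))) := by ring
    _ ≤ (a.factorial : ℝ) * (Real.sqrt 2 * Real.sqrt n * ((n:ℝ) ^ n * exp (-(n:ℝ)))) := h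
    _ = Real.sqrt 2 * (Real.sqrt n * (n:ℝ) ^ n * exp (-(n:ℝ)) * a.factorial) := by ring


private lemma core_ineq (n m₁ k : ℕ) (hn : 1 ≤ n) (hm : 1 ≤ m₁) (hmn : m₁ ≤ n) (hk : k ≤ n)
    (t : ℝ) (ht : (m₁ : ℝ) ≤ t) :
    (n.factorial : ℝ) * t ^ k * exp (-t) ≤
      Real.sqrt ((n:ℝ) / m₁) * (n:ℝ) ^ n * exp (-(n:ℝ)) * k.factorial := by
  have hm₁r : (0:ℝ) < (m₁ : ℝ) := by exact_mod_cast hm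
  have hnr : (0:ℝ) < (n : ℝ) := by exact_mod_cast hn
  have ht0 : (0:ℝ) ≤ t := le_trans hm₁r.le ht
  have hsm : (0:ℝ) < Real.sqrt m₁ := Real.sqrt_pos.mpr hm₁r
  rw [Real.sqrt_div hnr.le (m₁:ℝ)]
  rw [show Real.sqrt (n:ℝ) / Real.sqrt (m₁:ℝ) * (n:ℝ) ^ n * exp (-(n:ℝ)) * (k.factorial:ℝ)
      = Real.sqrt (n:ℝ) * (n:ℝ) ^ n * exp (-(n:ℝ)) * (k.factorial:ℝ) / Real.sqrt (m₁:ℝ)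
      from by ring]
  rw [le_div_iff₀ hsm]
  rcases le_or_gt m₁ k with hcase | hcase
  · -- k ≥ m₁, so k ≥ 1
    have hk1 : 1 ≤ k := le_trans hm hcase
    have hp := poisson_max k t ht0
    have hs := stirling_ineq k n hk1 hk
    calc (n.factorial : ℝ) * t ^ k * exp (-t) * Real.sqrt m₁
        = (t ^ k * exp (-t)) * Real.sqrt (m₁:ℝ) * (n.factorial:ℝ) := by ring
      _ ≤ ((k:ℝ) ^ k * exp (-(k:ℝ))) * Real.sqrt (k:ℝ) * (n.factorial:ℝ) := by
          gcongr
      _ = (n.factorial : ℝ) * (k:ℝ) ^ k * exp (-(k:ℝ)) * Real.sqrt (k:ℝ) := by ring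
      _ ≤ Real.sqrt (n:ℝ) * (n:ℝ) ^ n * exp (-(n:ℝ)) * (k.factorial:ℝ) := hs
  · -- k < m₁
    have hkm : (k:ℝ) ≤ (m₁:ℝ) := by exact_mod_cast hcase.le
    have hp := poisson_mono k (m₁:ℝ) t hm₁r hkm ht
    have hfact : (m₁.factorial : ℝ) * (m₁:ℝ) ^ k ≤ (k.factorial : ℝ) * (m₁:ℝ) ^ m₁ := by
      exact_mod_cast fact_mul_pow_le m₁ k hcase.le
    have hs := stirling_ineq m₁ n hm hmn
    have hmf : (0:ℝ) < (m₁.factorial : ℝ) := by exact_mod_cast m₁.factorial_pos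
    refine le_of_mul_le_mul_right ?_ hmf
    calc (n.factorial : ℝ) * t ^ k * exp (-t) * Real.sqrt m₁ * (m₁.factorial:ℝ)
        = (t ^ k * exp (-t)) * ((n.factorial:ℝ) * Real.sqrt (m₁:ℝ) * (m₁.factorial:ℝ)) := by ring
      _ ≤ ((m₁:ℝ) ^ k * exp (-(m₁:ℝ))) *
            ((n.factorial:ℝ) * Real.sqrt (m₁:ℝ) * (m₁.factorial:ℝ)) := by
          exact mul_le_mul_of_nonneg_right hp (by positivity)
      _ = ((m₁.factorial:ℝ) * (m₁:ℝ) ^ k) *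
            (exp (-(m₁:ℝ)) * (n.factorial:ℝ) * Real.sqrt (m₁:ℝ)) := by ring
      _ ≤ ((k.factorial:ℝ) * (m₁:ℝ) ^ m₁) *
            (exp (-(m₁:ℝ)) * (n.factorial:ℝ) * Real.sqrt (m₁:ℝ)) := by
          exact mul_le_mul_of_nonneg_right hfact (by positivity)
      _ = (k.factorial:ℝ) *
            ((n.factorial:ℝ) * (m₁:ℝ) ^ m₁ * exp (-(m₁:ℝ)) * Real.sqrt (m₁:ℝ)) := by ring
      _ ≤ (k.factorial:ℝ) *
            (Real.sqrt (n:ℝ) * (n:ℝ) ^ n * exp (-(n:ℝ)) * (m₁.factorial:ℝ)) := by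
          exact mul_le_mul_of_nonneg_left hs (by positivity)
      _ = Real.sqrt (n:ℝ) * (n:ℝ) ^ n * exp (-(n:ℝ)) * (k.factorial:ℝ) * (m₁.factorial:ℝ) := by
          ring

/-- Prohorov's inequality relating binomial and Poisson probabilities:
if `0 ≤ j ≤ n`, `x ∈ [0,1)` and `m₁` is a positive integer with
`n(1-x) - 1 < m₁ ≤ n(1-x)`, then
`C(n,j) x^j (1-x)^{n-j} ≤ √(n/m₁) · e^{-nx} (nx)^j / j!`. -/
theorem stmt_14 (n j m₁ : ℕ) (hn : 0 < n) (hj : j ≤ n) (x : ℝ) (hx0 : 0 ≤ x) (hx1 : x < 1)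
    (hm₁ : 0 < m₁) (hm₁l : (n : ℝ) * (1 - x) - 1 < m₁) (hm₁u : (m₁ : ℝ) ≤ n * (1 - x)) :
    (n.choose j : ℝ) * x ^ j * (1 - x) ^ (n - j) ≤
      Real.sqrt ((n : ℝ) / m₁) * Real.exp (-(n : ℝ) * x) * ((n : ℝ) * x) ^ j /
        (Nat.factorial j : ℝ) := by
  have hnr : (0:ℝ) < (n:ℝ) := by exact_mod_cast hn
  have hmn : m₁ ≤ n := by
    have : (m₁:ℝ) ≤ (n:ℝ) := le_trans hm₁u (by nlinarith)
    exact_mod_cast this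
  rcases eq_or_lt_of_le hx0 with hx | hx
  · -- x = 0
    have hx' : x = 0 := hx.symm
    subst hx'
    have hm₁r : (0:ℝ) < (m₁:ℝ) := by exact_mod_cast hm₁
    rcases Nat.eq_zero_or_pos j with hj0 | hj0
    · subst hj0
      simp only [Nat.choose_zero_right, Nat.cast_one, pow_zero, one_mul, mul_one,
        Nat.factorial_zero, div_one, Nat.sub_zero, sub_zero, mul_zero, Real.exp_zero]
      have h1 : (1:ℝ) ≤ (n:ℝ) / m₁ := by
        rw [one_le_div hm₁r]; exact_mod_cast hmn
      have : (1:ℝ) = Real.sqrt 1 := Real.sqrt_one.symm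
      calc (1:ℝ) ^ n = 1 := one_pow n
        _ = Real.sqrt 1 := Real.sqrt_one.symm
        _ ≤ Real.sqrt ((n:ℝ) / m₁) := Real.sqrt_le_sqrt h1
    · have hj0' : j ≠ 0 := hj0.ne'
      simp [zero_pow hj0', mul_zero]
  · -- 0 < x
    set k := n - j with hkdef
    have hjk : j + k = n := by omega
    have hcore := core_ineq n m₁ k hn hm₁ hmn (by omega) ((n:ℝ) * (1 - x)) hm₁u
    have hjf : (0:ℝ) < (j.factorial : ℝ) := by exact_mod_cast j.factorial_pos
    have hkf : (0:ℝ) < (k.factorial : ℝ) := by exact_mod_cast k.factorial_pos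
    have hchoose : (n.choose j : ℝ) * (j.factorial:ℝ) * (k.factorial:ℝ) = (n.factorial:ℝ) := by
      exact_mod_cast congrArg (Nat.cast : ℕ → ℝ) (Nat.choose_mul_factorial_mul_factorial hj)
    -- divide core by k!
    have hcore' : (n.choose j : ℝ) * (j.factorial:ℝ) * ((n:ℝ) * (1 - x)) ^ k *
          exp (-((n:ℝ) * (1 - x))) ≤
        Real.sqrt ((n:ℝ) / m₁) * (n:ℝ) ^ n * exp (-(n:ℝ)) := by
      refine le_of_mul_le_mul_right ?_ hkf
      calc (n.choose j : ℝ) * (j.factorial:ℝ) * ((n:ℝ) * (1 - x)) ^ k *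
            exp (-((n:ℝ) * (1 - x))) * (k.factorial:ℝ)
          = ((n.choose j : ℝ) * (j.factorial:ℝ) * (k.factorial:ℝ)) *
              ((n:ℝ) * (1 - x)) ^ k * exp (-((n:ℝ) * (1 - x))) := by ring
        _ = (n.factorial:ℝ) * ((n:ℝ) * (1 - x)) ^ k * exp (-((n:ℝ) * (1 - x))) := by
            rw [hchoose]
        _ ≤ Real.sqrt ((n:ℝ) / m₁) * (n:ℝ) ^ n * exp (-(n:ℝ)) * (k.factorial:ℝ) := hcore
    -- multiply by x^j * exp (n (1-x)) / n^k
    have hmulpos : (0:ℝ) < x ^ j * exp ((n:ℝ) * (1 - x)) / (n:ℝ) ^ k := by positivity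
    have hfinal := mul_le_mul_of_nonneg_right hcore' hmulpos.le
    have e1 : (n.choose j : ℝ) * (j.factorial:ℝ) * ((n:ℝ) * (1 - x)) ^ k *
          exp (-((n:ℝ) * (1 - x))) * (x ^ j * exp ((n:ℝ) * (1 - x)) / (n:ℝ) ^ k)
        = (n.choose j : ℝ) * x ^ j * (1 - x) ^ k * (j.factorial:ℝ) := by
      rw [Real.exp_neg, mul_pow]
      field_simp
    have e2 : Real.sqrt ((n:ℝ) / m₁) * (n:ℝ) ^ n * exp (-(n:ℝ)) *
          (x ^ j * exp ((n:ℝ) * (1 - x)) / (n:ℝ) ^ k)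
        = Real.sqrt ((n:ℝ) / m₁) * exp (-(n:ℝ) * x) * ((n:ℝ) * x) ^ j := by
      have hpow : (n:ℝ) ^ n = (n:ℝ) ^ j * (n:ℝ) ^ k := by
        rw [← pow_add, hjk]
      have hexp : exp (-(n:ℝ)) * exp ((n:ℝ) * (1 - x)) = exp (-(n:ℝ) * x) := by
        rw [← Real.exp_add]; congr 1; ring
      have hnk : ((n:ℝ)) ^ k ≠ 0 := by positivity
      rw [hpow]
      calc Real.sqrt ((n:ℝ)/m₁) * ((n:ℝ) ^ j * (n:ℝ) ^ k) * exp (-(n:ℝ)) *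
            (x ^ j * exp ((n:ℝ) * (1 - x)) / (n:ℝ) ^ k)
          = Real.sqrt ((n:ℝ)/m₁) * ((n:ℝ) ^ j * x ^ j) *
              (exp (-(n:ℝ)) * exp ((n:ℝ) * (1 - x))) * ((n:ℝ) ^ k / (n:ℝ) ^ k) := by ring
        _ = Real.sqrt ((n:ℝ)/m₁) * exp (-(n:ℝ) * x) * ((n:ℝ) * x) ^ j := by
            rw [div_self hnk, hexp, mul_pow]; ring
    rw [e1, e2] at hfinal
    rw [le_div_iff₀ hjf]
    exact hfinal
end

section
/- Let b, l, n be positive integers with l ≤ n, and let z ∈ [0,1]. Then ∫_z^1 t^b · l · C(n, l) · t^{l−1} (1−t)^{n−l} dt = ( l(l+1)⋯(l+b−1) / ( (n+1)(n+2)⋯(n+b) ) ) · Σ_{j=0}^{l+b−1} C(n+b, j) z^j (1−z)^{n+b−j}. -/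
open Finset

lemma term_deriv (n j : ℕ) (hjn : j < n) (t : ℝ) :
    HasDerivAt (fun t : ℝ => (n.choose j : ℝ) * t ^ j * (1 - t) ^ (n - j))
      (((j : ℝ) * (n.choose j : ℝ) * t ^ (j - 1) * (1 - t) ^ (n - j)) -
       (((j + 1 : ℕ) : ℝ) * (n.choose (j + 1) : ℝ) * t ^ ((j + 1) - 1) * (1 - t) ^ (n - (j + 1)))) t := by
  have h1 : HasDerivAt (fun t : ℝ => t ^ j) ((j : ℝ) * t ^ (j - 1)) t := hasDerivAt_pow j t
  have h2 : HasDerivAt (fun t : ℝ => (1 - t) ^ (n - j))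
      ((((n - j : ℕ) : ℝ) * (1 - t) ^ (n - j - 1)) * (0 - 1)) t :=
    (hasDerivAt_pow (n - j) (1 - t)).comp t ((hasDerivAt_const t 1).sub (hasDerivAt_id t))
  have h3 := (h1.mul h2).const_mul ((n.choose j : ℝ))
  convert h3 using 1
  · rfl
  · rfl
  · ext y; simp only [Pi.mul_apply]; ring
  have hcR : ((j : ℝ) + 1) * (n.choose (j + 1) : ℝ) = (n.choose j : ℝ) * ((n : ℝ) - j) := by
    have h := congrArg (Nat.cast : ℕ → ℝ) (Nat.choose_succ_right_eq n j)
    push_cast [Nat.cast_sub hjn.le] at h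
    linear_combination h
  have hnj : n - (j + 1) = n - j - 1 := by omega
  have hj1 : (j + 1) - 1 = j := rfl
  rw [hnj, hj1]
  push_cast [Nat.cast_sub hjn.le]
  linear_combination (-(t ^ j * (1 - t) ^ (n - j - 1))) * hcR

lemma deriv_aux (m n : ℕ) (hmn : m ≤ n) (t : ℝ) :
    HasDerivAt (fun t : ℝ => -(∑ j ∈ range m, (n.choose j : ℝ) * t ^ j * (1 - t) ^ (n - j)))
      ((m : ℝ) * (n.choose m : ℝ) * t ^ (m - 1) * (1 - t) ^ (n - m)) t := by
  have hsum := (HasDerivAt.fun_sum (fun j hj =>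
    term_deriv n j (lt_of_lt_of_le (mem_range.mp hj) hmn) t)).neg
  convert hsum using 1
  · rfl
  · rfl
  · rfl
  rw [Finset.sum_range_sub' (fun j => (j : ℝ) * (n.choose j : ℝ) * t ^ (j - 1) * (1 - t) ^ (n - j)) m]
  simp

lemma int_aux (m n : ℕ) (hmn : m ≤ n) (z : ℝ) :
    ∫ t in z..1, (m : ℝ) * (n.choose m : ℝ) * t ^ (m - 1) * (1 - t) ^ (n - m) =
      ∑ j ∈ range m, (n.choose j : ℝ) * z ^ j * (1 - z) ^ (n - j) := by
  have := intervalIntegral.integral_eq_sub_of_hasDerivAt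
    (f := fun t : ℝ => -(∑ j ∈ range m, (n.choose j : ℝ) * t ^ j * (1 - t) ^ (n - j)))
    (f' := fun t : ℝ => (m : ℝ) * (n.choose m : ℝ) * t ^ (m - 1) * (1 - t) ^ (n - m))
    (a := z) (b := 1)
    (fun t _ => deriv_aux m n hmn t)
    (by apply Continuous.intervalIntegrable; fun_prop)
  rw [this]
  have h1 : ∑ j ∈ range m, (n.choose j : ℝ) * (1 : ℝ) ^ j * (1 - 1) ^ (n - j) = 0 := by
    apply Finset.sum_eq_zero
    intro j hj
    have : n - j ≠ 0 := by have := mem_range.mp hj; omega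
    simp [zero_pow this]
  simp only [h1]
  ring

lemma nat_aux (b l n : ℕ) (hln : l ≤ n) :
    l * n.choose l * ∏ i ∈ range b, (n + 1 + i) =
      (l + b) * ((n + b).choose (l + b)) * ∏ i ∈ range b, (l + i) := by
  induction b with
  | zero => simp
  | succ b ih =>
    rw [Finset.prod_range_succ, Finset.prod_range_succ, ← mul_assoc, ih]
    have h : (n + b + 1) * ((n + b).choose (l + b)) =
        ((n + b + 1).choose (l + b + 1)) * (l + b + 1) := Nat.add_one_mul_choose_eq (n + b) (l + b)
    have h2 : n + (b + 1) = n + b + 1 := by omega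
    have h3 : l + (b + 1) = l + b + 1 := by omega
    rw [h2, h3]
    calc (l + b) * ((n + b).choose (l + b)) * (∏ i ∈ range b, (l + i)) * (n + 1 + b)
        = ((n + b + 1) * ((n + b).choose (l + b))) * ((l + b) * ∏ i ∈ range b, (l + i)) := by ring
      _ = (((n + b + 1).choose (l + b + 1)) * (l + b + 1)) * ((l + b) * ∏ i ∈ range b, (l + i)) := by
            rw [h]
      _ = (l + b + 1) * ((n + b + 1).choose (l + b + 1)) * ((∏ i ∈ range b, (l + i)) * (l + b)) := by
            ring

/-- for positive integers `b`, `l ≤ n` and `z ∈ [0,1]`,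
`∫_z^1 t^b · l·C(n,l)·t^{l-1}(1-t)^{n-l} dt
  = (l(l+1)⋯(l+b-1) / ((n+1)(n+2)⋯(n+b))) · Σ_{j=0}^{l+b-1} C(n+b,j) z^j (1-z)^{n+b-j}`. -/
theorem stmt_15 (b l n : ℕ) (hb : 0 < b) (hl : 0 < l) (hln : l ≤ n) (z : ℝ)
    (hz0 : 0 ≤ z) (hz1 : z ≤ 1) :
    ∫ t in z..1,
        t ^ b * ((l : ℝ) * (n.choose l : ℝ) * t ^ (l - 1) * (1 - t) ^ (n - l)) =
      (∏ i ∈ Finset.range b, ((l : ℝ) + i)) / (∏ i ∈ Finset.range b, ((n : ℝ) + i + 1)) *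
        ∑ j ∈ Finset.range (l + b),
          ((n + b).choose j : ℝ) * z ^ j * (1 - z) ^ (n + b - j) := by
  set P : ℝ := ∏ i ∈ range b, ((l : ℝ) + i) with hP
  set Q : ℝ := ∏ i ∈ range b, ((n : ℝ) + i + 1) with hQ
  have hQpos : 0 < Q := Finset.prod_pos (fun i _ => by positivity)
  have hQne : Q ≠ 0 := ne_of_gt hQpos
  have hcast : (l : ℝ) * (n.choose l : ℝ) * Q =
      ((l : ℝ) + (b : ℝ)) * (((n + b).choose (l + b) : ℕ) : ℝ) * P := by
    have e1 : Q = ∏ i ∈ range b, ((n : ℝ) + 1 + i) := by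
      rw [hQ]; apply Finset.prod_congr rfl; intros; ring
    rw [e1, hP]
    exact_mod_cast nat_aux b l n hln
  have hconst : (l : ℝ) * (n.choose l : ℝ) =
      P / Q * ((l : ℝ) + (b : ℝ)) * (((n + b).choose (l + b) : ℕ) : ℝ) := by
    field_simp
    linear_combination hcast
  have hmn : l + b ≤ n + b := by omega
  have hint := int_aux (l + b) (n + b) hmn z
  have hfun : ∀ t : ℝ, t ^ b * ((l : ℝ) * (n.choose l : ℝ) * t ^ (l - 1) * (1 - t) ^ (n - l)) =
      P / Q * (((l + b : ℕ) : ℝ) * (((n + b).choose (l + b)) : ℝ) * t ^ (l + b - 1) *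
        (1 - t) ^ ((n + b) - (l + b))) := by
    intro t
    have h1 : (n + b) - (l + b) = n - l := by omega
    have h2 : t ^ b * t ^ (l - 1) = t ^ (l + b - 1) := by
      rw [← pow_add]; congr 1; omega
    rw [h1, hconst, ← h2]
    push_cast
    ring
  simp only [hfun]
  rw [intervalIntegral.integral_const_mul, hint]
end
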